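/- arXiv:1912.09965 — 12 statements merged into one kernel-verified Lean document; each statement's English description precedes it below -/
import Mathlib

section
/- Let (S₁,·) and (S₂,·) be semigroups and let A ⊆ S₁ and B ⊆ S₂ be (right) piecewise syndetic sets. Then A × B is (right) piecewise syndetic in the product semigroup S₁ × S₂ (with coordinatewise multiplication). -/
/-- A set `A` in a semigroup `S` is (right) thick if for every finite nonempty
set `E ⊆ S` there exists `x ∈ S` with `E * x ⊆ A`. -/
def IsThick {S : Type*} [Semigroup S] (A : Set S) : Prop :=
  ∀ E : Finset S, E.Nonempty → ∃ x : S, ∀ e ∈ E, e * x ∈ A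

/-- A set `A` in a semigroup `S` is (right) piecewise syndetic if there is a finite
nonempty set `F ⊆ S` such that `⋃_{t ∈ F} t⁻¹A` is thick. -/
def IsPiecewiseSyndetic {S : Type*} [Semigroup S] (A : Set S) : Prop :=
  ∃ F : Finset S, F.Nonempty ∧ IsThick (⋃ t ∈ F, {s : S | t * s ∈ A})

theorem piecewiseSyndetic_prod {S₁ S₂ : Type*} [Semigroup S₁] [Semigroup S₂]
    {A : Set S₁} {B : Set S₂} (hA : IsPiecewiseSyndetic A) (hB : IsPiecewiseSyndetic B) :
    IsPiecewiseSyndetic (A ×ˢ B) := by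
  obtain ⟨F₁, hF₁, hT₁⟩ := hA
  classical
  obtain ⟨F₂, hF₂, hT₂⟩ := hB
  refine ⟨F₁ ×ˢ F₂, hF₁.product hF₂, ?_⟩
  intro E hE
  obtain ⟨x₁, hx₁⟩ := hT₁ (E.image Prod.fst) (hE.image _)
  obtain ⟨x₂, hx₂⟩ := hT₂ (E.image Prod.snd) (hE.image _)
  refine ⟨(x₁, x₂), ?_⟩
  rintro ⟨e₁, e₂⟩ he
  have h1 := hx₁ e₁ (Finset.mem_image_of_mem _ he)
  have h2 := hx₂ e₂ (Finset.mem_image_of_mem _ he)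
  simp only [Set.mem_iUnion, Set.mem_setOf_eq] at h1 h2 ⊢
  obtain ⟨t₁, ht₁, hm₁⟩ := h1
  obtain ⟨t₂, ht₂, hm₂⟩ := h2
  exact ⟨(t₁, t₂), Finset.mem_product.2 ⟨ht₁, ht₂⟩, hm₁, hm₂⟩
end

section
/- Every (right) piecewise syndetic subset of a semigroup (S,·) is the intersection of a (right) thick set and a (right) syndetic set. -/
/-- A set `A` in a semigroup `S` is (right) syndetic if there is a finite nonempty
set `F ⊆ S` such that `⋃_{t ∈ F} t⁻¹A = S`, where `t⁻¹A = {s : t * s ∈ A}`. -/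
def IsSyndetic {S : Type*} [Semigroup S] (A : Set S) : Prop :=
  ∃ F : Finset S, F.Nonempty ∧ (⋃ t ∈ F, {s : S | t * s ∈ A}) = Set.univ

theorem piecewiseSyndetic_eq_inter_thick_syndetic {S : Type*} [Semigroup S]
    {A : Set S} (hA : IsPiecewiseSyndetic A) :
    ∃ T C : Set S, IsThick T ∧ IsSyndetic C ∧ A = T ∩ C := by
  classical
  obtain ⟨F, hF, hB⟩ := hA
  set B : Set S := ⋃ t ∈ F, {s : S | t * s ∈ A} with hBdef
  refine ⟨A ∪ B, A ∪ Bᶜ, ?_, ?_, ?_⟩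
  · intro E hE
    obtain ⟨x, hx⟩ := hB E hE
    exact ⟨x, fun e he => Or.inr (hx e he)⟩
  · refine ⟨F ∪ (F.image₂ (· * ·) F), ⟨hF.choose, Finset.mem_union_left _ hF.choose_spec⟩, ?_⟩
    ext s
    simp only [Set.mem_iUnion, Set.mem_univ, iff_true]
    obtain ⟨t0, ht0⟩ := hF
    by_cases h : t0 * s ∈ B
    · rw [hBdef] at h
      simp only [Set.mem_iUnion, Set.mem_setOf_eq] at h
      obtain ⟨t', ht'F, ht'⟩ := h
      refine ⟨t' * t0, Finset.mem_union_right _ (Finset.mem_image₂_of_mem ht'F ht0),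
        Or.inl ?_⟩
      rw [mul_assoc]; exact ht'
    · exact ⟨t0, Finset.mem_union_left _ ht0, Or.inr h⟩
  · ext s
    by_cases hs : s ∈ B <;> simp [hs]
end

section
/- Let (S₁,·) and (S₂,·) be infinite semigroups and let A ⊆ S₁ and B ⊆ S₂ be quasi-central sets (in the combinatorial sense). Then A × B is quasi-central in the product semigroup S₁ × S₂ (with coordinatewise multiplication). -/
/-- A set `A` in a semigroup `S` is quasi-central (in the combinatorial sense) if there
is a decreasing sequence `⟨C_n⟩` of subsets of `A` such that (1) for each `n` and each
`x ∈ C_n` there is `m` with `C_m ⊆ x⁻¹C_n`, and (2) each `C_n` is piecewise syndetic. -/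
def IsQuasiCentral {S : Type*} [Semigroup S] (A : Set S) : Prop :=
  ∃ C : ℕ → Set S, (∀ n, C n ⊆ A) ∧ (∀ n, C (n + 1) ⊆ C n) ∧
    (∀ n, ∀ x ∈ C n, ∃ m, C m ⊆ {s : S | x * s ∈ C n}) ∧
    (∀ n, IsPiecewiseSyndetic (C n))

theorem quasiCentral_prod {S₁ S₂ : Type*} [Semigroup S₁] [Semigroup S₂]
    [Infinite S₁] [Infinite S₂]
    {A : Set S₁} {B : Set S₂} (hA : IsQuasiCentral A) (hB : IsQuasiCentral B) :
    IsQuasiCentral (A ×ˢ B) := by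
  classical
  obtain ⟨C, hCA, hCdec, hCx, hCps⟩ := hA
  obtain ⟨D, hDB, hDdec, hDx, hDps⟩ := hB
  have hCanti : ∀ m n, m ≤ n → C n ⊆ C m := fun m n h => antitone_nat_of_succ_le hCdec h
  have hDanti : ∀ m n, m ≤ n → D n ⊆ D m := fun m n h => antitone_nat_of_succ_le hDdec h
  refine ⟨fun n => C n ×ˢ D n, ?_, ?_, ?_, ?_⟩
  · intro n; exact Set.prod_mono (hCA n) (hDB n)
  · intro n; exact Set.prod_mono (hCdec n) (hDdec n)
  · rintro n ⟨x₁, x₂⟩ ⟨hx₁, hx₂⟩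
    obtain ⟨m₁, hm₁⟩ := hCx n x₁ hx₁
    obtain ⟨m₂, hm₂⟩ := hDx n x₂ hx₂
    refine ⟨max m₁ m₂, ?_⟩
    rintro ⟨s₁, s₂⟩ ⟨hs₁, hs₂⟩
    exact ⟨hm₁ (hCanti m₁ _ (le_max_left _ _) hs₁), hm₂ (hDanti m₂ _ (le_max_right _ _) hs₂)⟩
  · intro n
    obtain ⟨F₁, hF₁ne, hF₁⟩ := hCps n
    obtain ⟨F₂, hF₂ne, hF₂⟩ := hDps n
    refine ⟨F₁ ×ˢ F₂, hF₁ne.product hF₂ne, ?_⟩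
    intro E hE
    obtain ⟨x₁, hx₁⟩ := hF₁ (E.image Prod.fst) (hE.image _)
    obtain ⟨x₂, hx₂⟩ := hF₂ (E.image Prod.snd) (hE.image _)
    refine ⟨(x₁, x₂), ?_⟩
    rintro ⟨e₁, e₂⟩ he
    have h1 := hx₁ e₁ (Finset.mem_image_of_mem _ he)
    have h2 := hx₂ e₂ (Finset.mem_image_of_mem _ he)
    simp only [Set.mem_iUnion] at h1 h2 ⊢
    obtain ⟨t₁, ht₁, h1⟩ := h1
    obtain ⟨t₂, ht₂, h2⟩ := h2
    exact ⟨(t₁, t₂), Finset.mk_mem_product ht₁ ht₂, h1, h2⟩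
end

section
/- Let (S₁,·) and (S₂,·) be semigroups, and for each i ∈ ℕ let A_i ⊆ S₁ and B_i ⊆ S₂. If the family {A_i : i ∈ ℕ} is collectionwise piecewise syndetic in S₁ and the family {B_i : i ∈ ℕ} is collectionwise piecewise syndetic in S₂, then the family {A_i × B_i : i ∈ ℕ} is collectionwise piecewise syndetic in the product semigroup S₁ × S₂ (with coordinatewise multiplication). -/
/-- A family `⟨C_i⟩_{i ∈ ℕ}` of subsets of a semigroup `S` is collectionwise thick if
the intersection of every finite nonempty subfamily is thick. -/
def IsCollectionwiseThick {S : Type*} [Semigroup S] (C : ℕ → Set S) : Prop :=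
  ∀ F : Finset ℕ, F.Nonempty → IsThick (⋂ i ∈ F, C i)

/-- A family `⟨C_i⟩_{i ∈ ℕ}` of subsets of a semigroup `S` is collectionwise piecewise
syndetic if for each `i` there is a finite nonempty `K_i ⊆ S` such that the family
`⟨K_i⁻¹C_i⟩_{i ∈ ℕ}` is collectionwise thick, where `K⁻¹C = ⋃_{t ∈ K} t⁻¹C`. -/
def IsCollectionwisePiecewiseSyndetic {S : Type*} [Semigroup S] (C : ℕ → Set S) : Prop :=
  ∃ K : ℕ → Finset S, (∀ i, (K i).Nonempty) ∧
    IsCollectionwiseThick (fun i => ⋃ t ∈ K i, {s : S | t * s ∈ C i})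

theorem collectionwisePiecewiseSyndetic_prod {S₁ S₂ : Type*} [Semigroup S₁] [Semigroup S₂]
    {A : ℕ → Set S₁} {B : ℕ → Set S₂}
    (hA : IsCollectionwisePiecewiseSyndetic A) (hB : IsCollectionwisePiecewiseSyndetic B) :
    IsCollectionwisePiecewiseSyndetic (fun i => A i ×ˢ B i) := by
  classical
  obtain ⟨K₁, hK₁ne, hK₁⟩ := hA
  obtain ⟨K₂, hK₂ne, hK₂⟩ := hB
  refine ⟨fun i => (K₁ i) ×ˢ (K₂ i), fun i => (hK₁ne i).product (hK₂ne i), ?_⟩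
  intro F hF E hE
  obtain ⟨x₁, hx₁⟩ := hK₁ F hF (E.image Prod.fst) (hE.image _)
  obtain ⟨x₂, hx₂⟩ := hK₂ F hF (E.image Prod.snd) (hE.image _)
  refine ⟨(x₁, x₂), fun e he => ?_⟩
  have h1 := hx₁ e.1 (Finset.mem_image_of_mem _ he)
  have h2 := hx₂ e.2 (Finset.mem_image_of_mem _ he)
  simp only [Set.mem_iInter, Set.mem_iUnion] at h1 h2 ⊢
  intro i hi
  obtain ⟨t₁, ht₁, hm1⟩ := h1 i hi
  obtain ⟨t₂, ht₂, hm2⟩ := h2 i hi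
  exact ⟨(t₁, t₂), Finset.mk_mem_product ht₁ ht₂, ⟨hm1, hm2⟩⟩
end

section
/- Let (S₁,·) and (S₂,·) be countable commutative semigroups and let A ⊆ S₁ and B ⊆ S₂ be central sets (in the combinatorial sense). Then A × B is central in the product semigroup S₁ × S₂ (with coordinatewise multiplication). -/
/-- A set `A` in a countable semigroup `S` is central (in the combinatorial sense) if there
is a decreasing sequence `⟨C_n⟩` of subsets of `A` such that (1) for each `n` and each
`x ∈ C_n` there is `m` with `C_m ⊆ x⁻¹C_n`, and (2) the family `{C_n : n ∈ ℕ}` is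
collectionwise piecewise syndetic. -/
def IsCentral {S : Type*} [Semigroup S] (A : Set S) : Prop :=
  ∃ C : ℕ → Set S, (∀ n, C n ⊆ A) ∧ (∀ n, C (n + 1) ⊆ C n) ∧
    (∀ n, ∀ x ∈ C n, ∃ m, C m ⊆ {s : S | x * s ∈ C n}) ∧
    IsCollectionwisePiecewiseSyndetic C

theorem central_prod {S₁ S₂ : Type*} [CommSemigroup S₁] [CommSemigroup S₂]
    [Countable S₁] [Countable S₂]
    {A : Set S₁} {B : Set S₂} (hA : IsCentral A) (hB : IsCentral B) :
    IsCentral (A ×ˢ B) := by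
  classical
  obtain ⟨C, hCA, hCdec, hCrec, K₁, hK₁ne, hK₁th⟩ := hA
  obtain ⟨D, hDB, hDdec, hDrec, K₂, hK₂ne, hK₂th⟩ := hB
  have hCanti : ∀ m n, m ≤ n → C n ⊆ C m := by
    intro m n h
    induction h with
    | refl => exact le_rfl
    | step _ ih => exact (hCdec _).trans ih
  have hDanti : ∀ m n, m ≤ n → D n ⊆ D m := by
    intro m n h
    induction h with
    | refl => exact le_rfl
    | step _ ih => exact (hDdec _).trans ih
  refine ⟨fun n => C n ×ˢ D n, ?_, ?_, ?_, ?_⟩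
  · intro n; exact Set.prod_mono (hCA n) (hDB n)
  · intro n; exact Set.prod_mono (hCdec n) (hDdec n)
  · rintro n ⟨a, b⟩ ⟨ha, hb⟩
    obtain ⟨m₁, hm₁⟩ := hCrec n a ha
    obtain ⟨m₂, hm₂⟩ := hDrec n b hb
    refine ⟨max m₁ m₂, ?_⟩
    rintro ⟨s₁, s₂⟩ ⟨hs₁, hs₂⟩
    exact ⟨hm₁ (hCanti m₁ _ (le_max_left _ _) hs₁),
      hm₂ (hDanti m₂ _ (le_max_right _ _) hs₂)⟩
  · refine ⟨fun i => (K₁ i) ×ˢ (K₂ i), fun i => (hK₁ne i).product (hK₂ne i), ?_⟩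
    intro F hF E hE
    obtain ⟨x₁, hx₁⟩ := hK₁th F hF (E.image Prod.fst) (hE.image _)
    obtain ⟨x₂, hx₂⟩ := hK₂th F hF (E.image Prod.snd) (hE.image _)
    refine ⟨(x₁, x₂), ?_⟩
    intro e he
    have h1 := hx₁ e.1 (Finset.mem_image_of_mem _ he)
    have h2 := hx₂ e.2 (Finset.mem_image_of_mem _ he)
    simp only [Set.mem_iInter] at h1 h2 ⊢
    intro i hi
    have h1i := h1 i hi
    have h2i := h2 i hi
    simp only [Set.mem_iUnion] at h1i h2i ⊢
    obtain ⟨t₁, ht₁, hm1⟩ := h1i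
    obtain ⟨t₂, ht₂, hm2⟩ := h2i
    exact ⟨(t₁, t₂), Finset.mem_product.2 ⟨ht₁, ht₂⟩, hm1, hm2⟩
end

section
/- Let (S,·) be a commutative semigroup and let A ⊆ S be a J-set. Then for every finite nonempty set F of sequences f : ℕ → S, the collection {H ∈ P_f(ℕ) : there exists a ∈ S such that a·∏_{t∈H} f(t) ∈ A for all f ∈ F} is a č-ip* set in the partial semigroup (P_f(ℕ),⊎). -/
/-- The product `∏_{t ∈ H} f t` over a nonempty finite set `H ⊆ ℕ` in a semigroup,
computed in increasing order of the indices (in a commutative semigroup the order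
is immaterial). -/
def semigroupProd {S : Type*} [Semigroup S] (f : ℕ → S) (H : Finset ℕ) (hH : H.Nonempty) : S :=
  ((H.sort (· ≤ ·)).tail).foldl (fun x t => x * f t) (f (H.min' hH))

/-- A set `A` in a commutative semigroup `S` is a J-set if for every finite nonempty set
`F` of sequences in `S` there are `a ∈ S` and a finite nonempty `H ⊆ ℕ` such that
`a * ∏_{t ∈ H} f t ∈ A` for every `f ∈ F`. -/
def IsJSet {S : Type*} [CommSemigroup S] (A : Set S) : Prop :=
  ∀ F : Finset (ℕ → S), F.Nonempty →
    ∃ a : S, ∃ H : Finset ℕ, ∃ hH : H.Nonempty,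
      ∀ f ∈ F, a * semigroupProd f H hH ∈ A

/-- A subset `𝒜` of `P_f(ℕ)` (the nonempty finite subsets of `ℕ`) is a č-ip set if there
is a sequence `⟨H_n⟩` of nonempty finite subsets of `ℕ` with `max H_n < min H_{n+1}` for
all `n` such that all finite unions `⋃_{n ∈ G} H_n` (for `G` finite nonempty) lie in `𝒜`. -/
def IsCIP (𝒜 : Set (Finset ℕ)) : Prop :=
  ∃ H : ℕ → Finset ℕ, (∀ n, (H n).Nonempty) ∧
    (∀ n, ∀ a ∈ H n, ∀ b ∈ H (n + 1), a < b) ∧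
    ∀ G : Finset ℕ, G.Nonempty → G.biUnion H ∈ 𝒜

/-- A subset of `P_f(ℕ)` is č-ip* if it meets every č-ip set. -/
def IsCIPStar (𝒜 : Set (Finset ℕ)) : Prop :=
  ∀ ℬ : Set (Finset ℕ), IsCIP ℬ → (𝒜 ∩ ℬ).Nonempty

/-
The product of `f` over the block union `⋃_{n ∈ G} H_n` is the product over `G` of the block
products `∏_{t ∈ H_n} f t`. So if `A` is a J-set, applying the J-set property to the finitely
many block-product sequences `n ↦ ∏_{t ∈ H_n} f t`, `f ∈ F`, yields `a` and `G` such that the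
union `⋃_{n ∈ G} H_n`, which lies in the given č-ip set, also lies in our collection.
-/

lemma WithOne.coe_foldl_mul {S : Type*} [Semigroup S] (f : ℕ → S) :
    ∀ (l : List ℕ) (b : S),
      ((l.foldl (fun x t => x * f t) b : S) : WithOne S) =
        b * (l.map fun t => (f t : WithOne S)).prod
  | [], b => by simp
  | t :: l, b => by
    rw [List.foldl_cons, WithOne.coe_foldl_mul f l, List.map_cons, List.prod_cons,
      WithOne.coe_mul, mul_assoc]

/-- Adjoining a unit turns the order-dependent fold `semigroupProd` into a `Finset.prod`. -/
lemma WithOne.coe_semigroupProd {S : Type*} [CommSemigroup S] (f : ℕ → S) (H : Finset ℕ)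
    (hH : H.Nonempty) :
    ((semigroupProd f H hH : S) : WithOne S) = ∏ t ∈ H, (f t : WithOne S) := by
  have hsort : H.sort (· ≤ ·) = H.min' hH :: (H.sort (· ≤ ·)).tail := by
    rw [Finset.min'_eq_sorted_zero, List.getElem_zero, List.cons_head_tail]
  rw [Finset.prod_eq_multiset_prod, ← Finset.sort_eq (s := H) (r := (· ≤ ·)), hsort,
    Multiset.map_coe, Multiset.prod_coe, List.map_cons, List.prod_cons, semigroupProd,
    WithOne.coe_foldl_mul]

lemma semigroupProd_biUnion {S : Type*} [CommSemigroup S] (f : ℕ → S) {G : Finset ℕ}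
    {H : ℕ → Finset ℕ} (hdisj : (G : Set ℕ).PairwiseDisjoint H) (hG : G.Nonempty)
    (hH : ∀ n, (H n).Nonempty) (hGH : (G.biUnion H).Nonempty) :
    semigroupProd f (G.biUnion H) hGH =
      semigroupProd (fun n => semigroupProd f (H n) (hH n)) G hG := by
  apply WithOne.coe_injective
  simp only [WithOne.coe_semigroupProd, Finset.prod_biUnion hdisj]

lemma lt_of_mem_of_mem_of_lt {H : ℕ → Finset ℕ} (hne : ∀ n, (H n).Nonempty)
    (hlt : ∀ n, ∀ a ∈ H n, ∀ b ∈ H (n + 1), a < b) {m n : ℕ} (hmn : m < n)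
    {a b : ℕ} (ha : a ∈ H m) (hb : b ∈ H n) : a < b := by
  induction n, hmn using Nat.le_induction generalizing b with
  | base => exact hlt m a ha b hb
  | succ k _ ih =>
    obtain ⟨c, hc⟩ := hne k
    exact (ih hc).trans (hlt k c hc b hb)

open Function in
lemma pairwise_disjoint_of_lt_succ {H : ℕ → Finset ℕ} (hne : ∀ n, (H n).Nonempty)
    (hlt : ∀ n, ∀ a ∈ H n, ∀ b ∈ H (n + 1), a < b) : Pairwise (Disjoint on H) :=
  Pairwise.of_lt fun _ _ hmn => Finset.disjoint_left.mpr fun _ hx hx' =>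
    (lt_of_mem_of_mem_of_lt hne hlt hmn hx hx').false

theorem jset_cipStar {S : Type*} [CommSemigroup S] {A : Set S} (hA : IsJSet A)
    (F : Finset (ℕ → S)) (hF : F.Nonempty) :
    IsCIPStar {H : Finset ℕ |
      ∃ hH : H.Nonempty, ∃ a : S, ∀ f ∈ F, a * semigroupProd f H hH ∈ A} := by
  classical
  rintro ℬ ⟨H, hne, hlt, hmem⟩
  let blockProd : (ℕ → S) → ℕ → S := fun f n => semigroupProd f (H n) (hne n)
  obtain ⟨a, G, hG, ha⟩ := hA (F.image blockProd) (hF.image blockProd)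
  have hdisj : (G : Set ℕ).PairwiseDisjoint H :=
    (pairwise_disjoint_of_lt_succ hne hlt).set_pairwise _
  have hGH : (G.biUnion H).Nonempty := hG.biUnion fun n _ => hne n
  refine ⟨G.biUnion H, ⟨hGH, a, fun f hf => ?_⟩, hmem G hG⟩
  rw [semigroupProd_biUnion f hdisj hG hne hGH]
  exact ha (blockProd f) (Finset.mem_image_of_mem blockProd hf)
end

section
/- In the partial semigroup (P_f(ℕ),⊎), any two č-ip* sets have nonempty intersection. -/
open Function Hindman

theorem Hindman.FS.exists_eq_finsetSum {M : Type*} [AddCommMonoid M] {a : Stream' M} {m : M}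
    (hm : m ∈ FS a) : ∃ G : Finset ℕ, G.Nonempty ∧ m = ∑ i ∈ G, a.get i := by
  induction hm with
  | head' a => exact ⟨{0}, Finset.singleton_nonempty 0, by simp [Stream'.head]⟩
  | tail' a m _ ih =>
    obtain ⟨G, hG, rfl⟩ := ih
    exact ⟨G.map (addRightEmbedding 1), hG.map, by simp [Stream'.get_tail]⟩
  | cons' a m _ ih =>
    obtain ⟨G, -, rfl⟩ := ih
    refine ⟨insert 0 (G.map (addRightEmbedding 1)), Finset.insert_nonempty _ _, ?_⟩
    rw [Finset.sum_insert (by simp)]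
    simp [Stream'.get_tail, Stream'.head]

theorem exists_forall_lt_of_pairwise_disjoint {K : ℕ → Finset ℕ} (hne : ∀ i, (K i).Nonempty)
    (hdisj : Pairwise (Disjoint on K)) (N : ℕ) : ∃ j, ∀ b ∈ K j, N < b := by
  have hinj : Injective fun i => (K i).min' (hne i) := fun i j hij => by
    refine hdisj.eq (Finset.not_disjoint_iff.mpr ⟨_, (K i).min'_mem (hne i), ?_⟩)
    simpa only [hij] using (K j).min'_mem (hne j)
  have hmin := hinj.tendsto_cofinite
  rw [Nat.cofinite_eq_atTop] at hmin
  obtain ⟨j, hj⟩ := (hmin.eventually_gt_atTop N).exists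
  exact ⟨j, fun b hb => hj.trans_le ((K j).min'_le b hb)⟩

theorem isCIP_of_pairwise_disjoint {𝒞 : Set (Finset ℕ)} {K : ℕ → Finset ℕ}
    (hne : ∀ i, (K i).Nonempty) (hdisj : Pairwise (Disjoint on K))
    (hunion : ∀ G : Finset ℕ, G.Nonempty → G.biUnion K ∈ 𝒞) : IsCIP 𝒞 := by
  choose next hnext using fun i =>
    exists_forall_lt_of_pairwise_disjoint hne hdisj ((K i).max' (hne i))
  refine ⟨fun n => K (next^[n] 0), fun n => hne _, fun n a ha b hb => ?_, fun G hG => ?_⟩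
  · dsimp only at ha hb
    rw [iterate_succ_apply'] at hb
    exact ((K _).le_max' a ha).trans_lt (hnext _ b hb)
  · rw [← Finset.image_biUnion]
    exact hunion _ (hG.image _)

theorem isCIP_of_FS_subset {𝒞 : Set (Finset ℕ)} {b : Stream' (Multiset ℕ)}
    (hb : FS b ⊆ Finset.val '' (𝒞 \ {∅})) : IsCIP 𝒞 := by
  obtain ⟨K, hK, rfl⟩ : ∃ K : ℕ → Finset ℕ, (∀ i, K i ∈ 𝒞 \ {∅}) ∧ b = fun i => (K i).val := by
    choose K hK hbK using fun i => hb (FS.singleton b i)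
    exact ⟨K, hK, funext fun i => (hbK i).symm⟩
  refine isCIP_of_pairwise_disjoint (K := K) (fun i => ?_) ?_ fun G hG => ?_
  · exact Finset.nonempty_iff_ne_empty.mpr (hK i).2
  · refine (pairwise_disjoint_on K).mpr fun i j hij => ?_
    obtain ⟨A, -, hA⟩ := hb (FS.add_two _ i j hij)
    exact Finset.disjoint_val.mp (Multiset.nodup_add.mp (hA ▸ A.nodup)).2.2
  · obtain ⟨A, hA, hAsum⟩ := hb (FS.finsetSum _ G hG)
    convert hA.1
    ext x
    rw [← Finset.mem_val (s := A), hAsum]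
    simp [Stream'.get]

theorem exists_isCIP_of_finite_cover {s : Set (Set (Finset ℕ))} (hs : s.Finite)
    (hcov : ∀ G : Finset ℕ, G.Nonempty → ∃ 𝒞 ∈ s, G ∈ 𝒞) : ∃ 𝒞 ∈ s, IsCIP 𝒞 := by
  have hcov' :
      FS (fun n => ({n} : Multiset ℕ)) ⊆ ⋃₀ ((fun 𝒞 => Finset.val '' (𝒞 \ {∅})) '' s) := by
    intro m hm
    obtain ⟨G, hG, rfl⟩ := FS.exists_eq_finsetSum hm
    obtain ⟨𝒞, h𝒞, hG𝒞⟩ := hcov G hG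
    refine ⟨_, ⟨𝒞, h𝒞, rfl⟩, G, ⟨hG𝒞, hG.ne_empty⟩, ?_⟩
    exact (Finset.sum_multiset_singleton G).symm
  obtain ⟨_, ⟨𝒞, h𝒞, rfl⟩, b, hb⟩ := FS_partition_regular _ _ (hs.image _) hcov'
  exact ⟨𝒞, h𝒞, isCIP_of_FS_subset hb⟩

theorem cipStar_inter_general (𝒜 ℬ : Set (Finset ℕ))
    (h𝒜 : IsCIPStar 𝒜) (hℬ : IsCIPStar ℬ) : (𝒜 ∩ ℬ).Nonempty := by
  by_contra hdisj
  have hcov : ∀ G : Finset ℕ, G.Nonempty → ∃ 𝒞 ∈ ({𝒜ᶜ, ℬᶜ} : Set (Set (Finset ℕ))), G ∈ 𝒞 :=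
    fun G _ => by
      by_cases hG : G ∈ 𝒜
      · exact ⟨ℬᶜ, by simp, fun hGℬ => hdisj ⟨G, hG, hGℬ⟩⟩
      · exact ⟨𝒜ᶜ, by simp, hG⟩
  obtain ⟨𝒞, h𝒞, hcip⟩ := exists_isCIP_of_finite_cover (by simp) hcov
  rcases h𝒞 with rfl | rfl
  · simpa using h𝒜 _ hcip
  · simpa using hℬ _ hcip

/-- In `(P_f(ℕ), ⊎)`, any two č-ip* sets have nonempty intersection. -/
theorem cipStar_inter (𝒜 ℬ : Set (Finset ℕ))
    (h𝒜' : ∀ H ∈ 𝒜, H.Nonempty) (hℬ' : ∀ H ∈ ℬ, H.Nonempty)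
    (h𝒜 : IsCIPStar 𝒜) (hℬ : IsCIPStar ℬ) : (𝒜 ∩ ℬ).Nonempty :=
  cipStar_inter_general 𝒜 ℬ h𝒜 hℬ
end

section
/- Let r ∈ ℕ and let P_f(ℕ) = A₁ ∪ A₂ ∪ … ∪ A_r be a partition of the collection of finite nonempty subsets of ℕ into r pieces. Then there exist i ∈ {1,…,r} and a sequence ⟨F_n⟩_{n=1}^∞ of finite nonempty subsets of ℕ with max F_n < min F_{n+1} for each n ∈ ℕ, such that ⋃_{n∈G} F_n ∈ A_i for every finite nonempty set G ⊆ ℕ. -/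
/-!
Code a finite set `H ⊆ ℕ` by the number `∑ i ∈ H, 2 ^ i` and colour positive integers by the
colour of their binary support. Hindman's finite sums theorem gives a sequence `b` all of whose
finite sums have one colour. Grouping `b` into blocks whose sums `c n` satisfy `2 ^ c n ∣ c (n + 1)`
(pigeonhole on partial sums modulo `2 ^ c n`) makes the binary supports `F n` of the `c n` a block
sequence. Finite sums of the `c n` are still finite sums of `b`, and the binary support of
`∑ n ∈ G, c n` is `⋃ n ∈ G, F n`.
-/

open Finset Function

theorem exists_Ico_dvd_sum (b : ℕ → ℕ) (p : ℕ) {m : ℕ} (hm : m ≠ 0) :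
    ∃ x y, p ≤ x ∧ x < y ∧ m ∣ ∑ j ∈ Ico x y, b j := by
  obtain ⟨x, hpx, y, -, hxy, hmod⟩ := (Set.Ici_infinite p).exists_lt_map_eq_of_mapsTo
    (f := fun t => (∑ j ∈ range t, b j) % m) (t := Set.Iio m)
    (fun t _ => Nat.mod_lt _ (Nat.pos_of_ne_zero hm)) (Set.finite_Iio m)
  refine ⟨x, y, hpx, hxy, ?_⟩
  have hdvd := (Nat.modEq_iff_dvd' (sum_le_sum_of_subset (range_subset_range.2 hxy.le))).mp hmod
  rwa [← sum_range_add_sum_Ico b hxy.le, Nat.add_sub_cancel_left] at hdvd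

def IsBlockSeq (F : ℕ → Finset ℕ) : Prop :=
  (∀ n, (F n).Nonempty) ∧ ∀ n, ∀ a ∈ F n, ∀ b ∈ F (n + 1), a < b

namespace IsBlockSeq

variable {F : ℕ → Finset ℕ}

theorem lt_of_lt (hF : IsBlockSeq F) {n m a b : ℕ} (hnm : n < m) (ha : a ∈ F n)
    (hb : b ∈ F m) : a < b := by
  induction m, hnm using Nat.le_induction generalizing b with
  | base => exact hF.2 n a ha b hb
  | succ m hnm ih =>
    obtain ⟨c, hc⟩ := hF.1 m
    exact (ih hc).trans (hF.2 m c hc b hb)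

theorem pairwise_disjoint (hF : IsBlockSeq F) : Pairwise (Disjoint on F) := by
  refine fun n m hnm => disjoint_left.2 fun a ha ha' => ?_
  rcases hnm.lt_or_gt with h | h
  · exact (hF.lt_of_lt h ha ha').false
  · exact (hF.lt_of_lt h ha' ha).false

theorem sum_mem_FS (hF : IsBlockSeq F) {M : Type*} [AddCommMonoid M] (b : ℕ → M)
    {G : Finset ℕ} (hG : G.Nonempty) : ∑ n ∈ G, ∑ j ∈ F n, b j ∈ Hindman.FS b := by
  rw [← sum_biUnion (hF.pairwise_disjoint.set_pairwise _)]
  obtain ⟨n, hn⟩ := hG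
  obtain ⟨j, hj⟩ := hF.1 n
  exact Hindman.FS.finsetSum b _ ⟨j, mem_biUnion.2 ⟨n, hn, hj⟩⟩

end IsBlockSeq

theorem exists_isBlockSeq_dvd_sum (b : ℕ → ℕ) (g : ℕ → ℕ) (hg : ∀ k, g k ≠ 0) :
    ∃ I, IsBlockSeq I ∧ ∀ n, g (∑ j ∈ I n, b j) ∣ ∑ j ∈ I (n + 1), b j := by
  have next_block : ∀ s : Finset ℕ, ∃ t : Finset ℕ, t.Nonempty ∧ (∀ a ∈ s, ∀ c ∈ t, a < c) ∧
      g (∑ j ∈ s, b j) ∣ ∑ j ∈ t, b j := by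
    intro s
    obtain ⟨x, y, hpx, hxy, hdvd⟩ := exists_Ico_dvd_sum b (s.sup id + 1) (hg (∑ j ∈ s, b j))
    refine ⟨Ico x y, nonempty_Ico.2 hxy, fun a ha c hc => ?_, hdvd⟩
    have := le_sup (f := id) ha
    have := (mem_Ico.1 hc).1
    simp only [id] at *
    omega
  choose next hne hlt hdvd using next_block
  refine ⟨fun n => next^[n + 1] ∅, ⟨fun n => ?_, fun n => ?_⟩, fun n => ?_⟩ <;>
    simp only [Function.iterate_succ_apply']
  exacts [hne _, hlt _, hdvd _]

namespace Nat

theorem lt_of_mem_bitIndices {i n : ℕ} (h : i ∈ n.bitIndices) : i < n :=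
  i.lt_two_pow_self.trans_le (two_pow_le_of_mem_bitIndices h)

theorem le_of_mem_bitIndices_of_two_pow_dvd {k n i : ℕ} (hd : 2 ^ k ∣ n)
    (h : i ∈ n.bitIndices) : k ≤ i := by
  obtain ⟨m, rfl⟩ := hd
  simp only [bitIndices_two_pow_mul, List.mem_map] at h
  omega

theorem toFinset_bitIndices_nonempty {n : ℕ} (hn : n ≠ 0) : n.bitIndices.toFinset.Nonempty :=
  nonempty_of_sum_ne_zero (f := (2 ^ ·)) (by rwa [sum_toFinset_bitIndices_two_pow])

theorem toFinset_bitIndices_sum {ι : Type*} (G : Finset ι) (c : ι → ℕ)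
    (h : (G : Set ι).PairwiseDisjoint fun n => (c n).bitIndices.toFinset) :
    (∑ n ∈ G, c n).bitIndices.toFinset = G.biUnion fun n => (c n).bitIndices.toFinset := by
  conv_lhs => rw [← sum_congr rfl fun n _ => sum_toFinset_bitIndices_two_pow (c n)]
  rw [← sum_biUnion h, toFinset_bitIndices_sum_two_pow]

end Nat

theorem isBlockSeq_toFinset_bitIndices {c : ℕ → ℕ} (hc : ∀ n, c n ≠ 0)
    (hdvd : ∀ n, 2 ^ c n ∣ c (n + 1)) : IsBlockSeq fun n => (c n).bitIndices.toFinset := by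
  refine ⟨fun n => Nat.toFinset_bitIndices_nonempty (hc n), fun n a ha b hb => ?_⟩
  rw [List.mem_toFinset] at ha hb
  exact (Nat.lt_of_mem_bitIndices ha).trans_le
    (Nat.le_of_mem_bitIndices_of_two_pow_dvd (hdvd n) hb)

theorem Hindman.FS_subset_of_add_mem {M : Type*} [AddSemigroup M] {a : Stream' M} {S : Set M}
    (ha : ∀ n, a.get n ∈ S) (hS : ∀ x ∈ S, ∀ y ∈ S, x + y ∈ S) : FS a ⊆ S := by
  intro m hm
  induction hm with
  | head' a => exact ha 0
  | tail' a m _ ih => exact ih fun n => ha (n + 1)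
  | cons' a m _ ih => exact hS _ (ha 0) _ (ih fun n => ha (n + 1))

theorem Hindman.exists_FS_subset_of_cover_pos {ι : Type*} [Finite ι] (B : ι → Set ℕ)
    (hB : ∀ n, n ≠ 0 → ∃ i, n ∈ B i) : ∃ i, ∃ b : Stream' ℕ, FS b ⊆ B i ∩ {n | n ≠ 0} := by
  have hcover : FS (Stream'.const 1) ⊆ ⋃₀ Set.range fun i => B i ∩ {n | n ≠ 0} := by
    intro n hn
    have hn0 : n ≠ 0 := FS_subset_of_add_mem (S := {n | n ≠ 0}) (fun _ => one_ne_zero)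
      (fun x _ y hy => by simp_all) hn
    obtain ⟨i, hi⟩ := hB n hn0
    exact ⟨_, ⟨i, rfl⟩, hi, hn0⟩
  obtain ⟨_, ⟨i, rfl⟩, b, hb⟩ := FS_partition_regular _ _ (Set.finite_range _) hcover
  exact ⟨i, b, hb⟩

theorem hindman_finite_unions_general (r : ℕ) (A : Fin r → Set (Finset ℕ))
    (hcover : ∀ H : Finset ℕ, H.Nonempty → ∃ i, H ∈ A i) :
    ∃ i : Fin r, ∃ F : ℕ → Finset ℕ, (∀ n, (F n).Nonempty) ∧
      (∀ n, ∀ a ∈ F n, ∀ b ∈ F (n + 1), a < b) ∧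
      ∀ G : Finset ℕ, G.Nonempty → G.biUnion F ∈ A i := by
  obtain ⟨i, b, hb⟩ := Hindman.exists_FS_subset_of_cover_pos
    (fun i => {n | n.bitIndices.toFinset ∈ A i}) fun n hn =>
      hcover _ (Nat.toFinset_bitIndices_nonempty hn)
  obtain ⟨I, hI, hdvd⟩ := exists_isBlockSeq_dvd_sum b (2 ^ ·) fun k => pow_ne_zero k two_ne_zero
  set c : ℕ → ℕ := fun n => ∑ j ∈ I n, b j
  have hc : ∀ n, c n ≠ 0 := fun n => (hb (by simpa using hI.sum_mem_FS b (singleton_nonempty n))).2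
  have hF := isBlockSeq_toFinset_bitIndices hc hdvd
  refine ⟨i, _, hF.1, hF.2, fun G hG => ?_⟩
  rw [← Nat.toFinset_bitIndices_sum G c (hF.pairwise_disjoint.set_pairwise _)]
  exact (hb (hI.sum_mem_FS b hG)).1

/-- Hindman's finite unions theorem: if the collection of nonempty finite subsets of `ℕ`
is partitioned into `r` pieces `A₁, …, A_r`, then some piece `A_i` contains all finite
unions of a sequence `⟨F_n⟩` of nonempty finite subsets of `ℕ` with
`max F_n < min F_{n+1}` for each `n`. -/
theorem hindman_finite_unions (r : ℕ) (hr : 0 < r) (A : Fin r → Set (Finset ℕ))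
    (hcover : ∀ H : Finset ℕ, H.Nonempty → ∃ i, H ∈ A i) :
    ∃ i : Fin r, ∃ F : ℕ → Finset ℕ, (∀ n, (F n).Nonempty) ∧
      (∀ n, ∀ a ∈ F n, ∀ b ∈ F (n + 1), a < b) ∧
      ∀ G : Finset ℕ, G.Nonempty → G.biUnion F ∈ A i :=
  hindman_finite_unions_general r A hcover
end

section
/- Let r ∈ ℕ, let ⟨F_n⟩_{n=1}^∞ be a sequence of finite nonempty subsets of ℕ with max F_n < min F_{n+1} for each n ∈ ℕ, and let A₁,…,A_r ⊆ P_f(ℕ) be such that ⋃_{n∈G} F_n ∈ A₁ ∪ … ∪ A_r for every finite nonempty set G ⊆ ℕ. Then there exist i ∈ {1,…,r} and a sequence ⟨G_n⟩_{n=1}^∞ of finite nonempty subsets of ℕ with max G_n < min G_{n+1} for each n ∈ ℕ, each G_n a finite union of the sets F_m, such that ⋃_{n∈H} G_n ∈ A_i for every finite nonempty set H ⊆ ℕ. -/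
/-!
Encode finite subsets of `ℕ` as multisets: a sum of finite sets is again a set (has no
duplicates) exactly when the summands are pairwise disjoint. Hindman's theorem for the singletons
`{n}` in the additive monoid `Multiset ℕ` therefore yields nonempty index sets `G_n` all of whose
finite sums lie in one colour class `{G | ⋃_{m ∈ G} F_m ∈ A_i}`; these sums being sets forces the
`G_n` to be pairwise disjoint, so the sums are unions. Pairwise disjoint finite sets eventually
lie above any bound, so some subsequence of the `G_n` increases blockwise, and since the `F_m`
increase, so do the corresponding unions of the `F_m`.
-/

open Filter Function Hindman

theorem forall_lt_of_lt_of_forall_lt_succ {α : Type*} [Preorder α] {F : ℕ → Finset α}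
    (hF : ∀ n, (F n).Nonempty) (hsep : ∀ n, ∀ a ∈ F n, ∀ b ∈ F (n + 1), a < b) {i j : ℕ}
    (hij : i < j) : ∀ a ∈ F i, ∀ b ∈ F j, a < b := by
  induction hij with
  | refl => exact hsep i
  | step _ ih =>
    intro a ha b hb
    obtain ⟨c, hc⟩ := hF _
    exact (ih a ha c hc).trans (hsep _ c hc b hb)

theorem Pairwise.eventually_cofinite_forall_lt {ι α : Type*} [LinearOrder α]
    [LocallyFiniteOrderBot α] {G : ι → Finset α} (hG : Pairwise (Disjoint on G)) (a : α) :
    ∀ᶠ i in cofinite, ∀ y ∈ G i, a < y := by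
  have hsub (y : α) : {i | y ∈ G i}.Subsingleton := fun i hi j hj =>
    hG.eq (Finset.not_disjoint_iff.2 ⟨y, hi, hj⟩)
  refine eventually_cofinite.2 (((Set.finite_Iic a).biUnion fun y _ => (hsub y).finite).subset ?_)
  intro i hi
  obtain ⟨y, hy, hya⟩ : ∃ y ∈ G i, y ≤ a := by simpa using hi
  exact Set.mem_biUnion hya hy

theorem Pairwise.exists_seq_forall_lt {ι α : Type*} [Infinite ι] [LinearOrder α]
    [LocallyFiniteOrderBot α] {G : ι → Finset α} (hG : Pairwise (Disjoint on G)) :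
    ∃ σ : ℕ → ι, ∀ m n, m < n → ∀ x ∈ G (σ m), ∀ y ∈ G (σ n), x < y := by
  obtain ⟨σ, -, hσ⟩ := exists_seq_of_forall_finset_exists (fun _ => True)
    (fun p q => ∀ x ∈ G p, ∀ y ∈ G q, x < y) fun s _ => by
      obtain ⟨q, hq⟩ := ((s.biUnion G).eventually_all.2 fun x _ =>
        hG.eventually_cofinite_forall_lt x).exists
      exact ⟨q, trivial, fun p hp x hx => hq x (Finset.mem_biUnion.2 ⟨p, hp, hx⟩)⟩
  exact ⟨σ, hσ⟩

theorem Hindman.exists_finsetSum_eq_of_mem_FS {M : Type*} [AddCommMonoid M] {a : Stream' M}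
    {m : M} (h : m ∈ FS a) : ∃ s : Finset ℕ, s.Nonempty ∧ ∑ i ∈ s, a.get i = m := by
  induction h with
  | head' a => exact ⟨{0}, Finset.singleton_nonempty 0, by simp [Stream'.head]⟩
  | tail' a m _ ih =>
    obtain ⟨s, hs, rfl⟩ := ih
    refine ⟨s.map (addRightEmbedding 1), hs.map, ?_⟩
    simp [Stream'.get_tail]
  | cons' a m _ ih =>
    obtain ⟨s, hs, rfl⟩ := ih
    refine ⟨insert 0 (s.map (addRightEmbedding 1)), Finset.insert_nonempty _ _, ?_⟩
    rw [Finset.sum_insert (by simp), Finset.sum_map]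
    simp [Stream'.get_tail, Stream'.head]

theorem Hindman.exists_pairwiseDisjoint_forall_biUnion_mem {ι : Type*} [Finite ι]
    (T : ι → Set (Finset ℕ)) (hT : ∀ G : Finset ℕ, G.Nonempty → ∃ i, G ∈ T i) :
    ∃ i, ∃ G : ℕ → Finset ℕ, (∀ n, (G n).Nonempty) ∧ Pairwise (Disjoint on G) ∧
      ∀ H : Finset ℕ, H.Nonempty → H.biUnion G ∈ T i := by
  let c (i : ι) : Set (Multiset ℕ) := Finset.val '' {G | G.Nonempty ∧ G ∈ T i}
  have hcov : FS (fun n => {n}) ⊆ ⋃₀ Set.range c := by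
    intro m hm
    obtain ⟨s, hs, rfl⟩ := exists_finsetSum_eq_of_mem_FS hm
    obtain ⟨i, hi⟩ := hT s hs
    exact ⟨c i, ⟨i, rfl⟩, s, ⟨hs, hi⟩, (Multiset.sum_map_singleton s.val).symm⟩
  obtain ⟨_, ⟨i, rfl⟩, b, hb⟩ := FS_partition_regular _ _ (Set.finite_range c) hcov
  choose G hG hGb using fun n => hb (FS.singleton b n)
  have hsum {H : Finset ℕ} (hH : H.Nonempty) : ∃ G' ∈ T i, G'.val = ∑ n ∈ H, (G n).val := by
    obtain ⟨G', hG', hG'b⟩ := hb (FS.finsetSum b H hH)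
    exact ⟨G', hG'.2, by simp only [hG'b, hGb]⟩
  refine ⟨i, G, fun n => (hG n).1, fun p q hpq => ?_, fun H hH => ?_⟩
  · obtain ⟨G', -, hG'⟩ := hsum (Finset.insert_nonempty p {q})
    rw [Finset.sum_pair hpq] at hG'
    exact Finset.disjoint_val.1 (Multiset.nodup_add.1 (hG' ▸ G'.nodup)).2.2
  · obtain ⟨G', hG'T, hG'⟩ := hsum hH
    convert hG'T using 1
    ext x
    rw [Finset.mem_biUnion, ← Finset.mem_val (s := G'), hG', Multiset.mem_sum]
    rfl

theorem hindman_finite_unions_relative_general (r : ℕ)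
    (F : ℕ → Finset ℕ) (hF : ∀ n, (F n).Nonempty)
    (hFsep : ∀ n, ∀ a ∈ F n, ∀ b ∈ F (n + 1), a < b)
    (A : Fin r → Set (Finset ℕ))
    (hcover : ∀ G : Finset ℕ, G.Nonempty → ∃ i, G.biUnion F ∈ A i) :
    ∃ i : Fin r, ∃ K : ℕ → Finset ℕ, (∀ n, (K n).Nonempty) ∧
      (∀ n, ∀ a ∈ (K n).biUnion F, ∀ b ∈ (K (n + 1)).biUnion F, a < b) ∧
      ∀ H : Finset ℕ, H.Nonempty → H.biUnion (fun n => (K n).biUnion F) ∈ A i := by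
  obtain ⟨i, G, hGne, hGdisj, hGA⟩ :=
    exists_pairwiseDisjoint_forall_biUnion_mem (fun i => {G | G.biUnion F ∈ A i}) hcover
  obtain ⟨σ, hσ⟩ := hGdisj.exists_seq_forall_lt
  refine ⟨i, fun n => G (σ n), fun n => hGne (σ n), fun n a ha b hb => ?_, fun H hH => ?_⟩
  · obtain ⟨j, hj, ha⟩ := Finset.mem_biUnion.1 ha
    obtain ⟨k, hk, hb⟩ := Finset.mem_biUnion.1 hb
    exact forall_lt_of_lt_of_forall_lt_succ hF hFsep
      (hσ n (n + 1) n.lt_succ_self j hj k hk) a ha b hb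
  · simpa only [Set.mem_ofPred_eq, Finset.image_biUnion, Finset.biUnion_biUnion] using
      hGA (H.image σ) (hH.image σ)

/-- Hindman's finite unions theorem, relative version: if `⟨F_n⟩` is a sequence of
nonempty finite subsets of `ℕ` with `max F_n < min F_{n+1}` for each `n`, and all finite
unions `⋃_{n ∈ G} F_n` lie in `A₁ ∪ … ∪ A_r`, then there are `i` and a sequence `⟨G_n⟩`
of nonempty finite subsets of `ℕ` with `max G_n < min G_{n+1}`, each `G_n` being a finite
union of the `F_m` (here `G_n = ⋃_{m ∈ K_n} F_m`), such that all finite unions of the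
`G_n` lie in `A_i`. -/
theorem hindman_finite_unions_relative (r : ℕ) (hr : 0 < r)
    (F : ℕ → Finset ℕ) (hF : ∀ n, (F n).Nonempty)
    (hFsep : ∀ n, ∀ a ∈ F n, ∀ b ∈ F (n + 1), a < b)
    (A : Fin r → Set (Finset ℕ))
    (hcover : ∀ G : Finset ℕ, G.Nonempty → ∃ i, G.biUnion F ∈ A i) :
    ∃ i : Fin r, ∃ K : ℕ → Finset ℕ, (∀ n, (K n).Nonempty) ∧
      (∀ n, ∀ a ∈ (K n).biUnion F, ∀ b ∈ (K (n + 1)).biUnion F, a < b) ∧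
      ∀ H : Finset ℕ, H.Nonempty → H.biUnion (fun n => (K n).biUnion F) ∈ A i :=
  hindman_finite_unions_relative_general r F hF hFsep A hcover
end

section
/- Let (S₁,·) and (S₂,·) be semigroups and let A ⊆ S₁ and B ⊆ S₂ be J-sets (in the non-commutative sense). Then A × B is a J-set (in the non-commutative sense) in the product semigroup S₁ × S₂ (with coordinatewise multiplication). -/
/-- The interleaved product `x(m, a, t, f) = (∏_{j=1}^{m} a(j)·f(t(j))) · a(m+1)`
in a semigroup. -/
def interProd {S : Type*} [Semigroup S] (m : ℕ) (a : Fin (m + 1) → S) (t : Fin m → ℕ)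
    (f : ℕ → S) : S :=
  ((List.finRange m).map (fun j => a j.castSucc * f (t j))).foldr (· * ·) (a (Fin.last m))

/-- A set `A` in a semigroup `S` is a J-set (in the non-commutative sense) if for every
finite nonempty set `F` of sequences in `S` there are `m ≥ 1`, `a ∈ S^{m+1}` and
`t(1) < … < t(m)` in `ℕ` such that `a(1)·f(t(1))·a(2)·f(t(2))⋯a(m)·f(t(m))·a(m+1) ∈ A`
for every `f ∈ F`. -/
def IsJSetNC {S : Type*} [Semigroup S] (A : Set S) : Prop :=
  ∀ F : Finset (ℕ → S), F.Nonempty →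
    ∃ m : ℕ, 0 < m ∧ ∃ a : Fin (m + 1) → S, ∃ t : Fin m → ℕ, StrictMono t ∧
      ∀ f ∈ F, interProd m a t f ∈ A

/-!
Finite index sets are encoded as words of the free semigroup on `ℕ`; the finite products of the
letters are exactly the strictly increasing words. A pattern with index list `L` is a choice of
coefficients `a(1), …, a(m+1)` to be interleaved with `f(L₁), …, f(Lₘ)`.

Fix an idempotent ultrafilter `U` on words containing the increasing ones. If `A` is a J-set,
the words on whose letters `A` admits a common pattern for a finite family `G` form a `U`-large
set. Otherwise Hindman's theorem gives a stream `b` of words all of whose finite products lie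
outside it; but the J-set property of `A`, applied to the block sequences
`k ↦ ε f(w₁) ε f(w₂) ⋯ ε f(wᵣ)` where `b k = w₁ ⋯ wᵣ`, produces such a product. Applying
Hindman's theorem inside this set (for the first coordinates), and then the same block argument
to `B` (for the second coordinates), yields one increasing word carrying a pattern for both.
-/

namespace FreeSemigroup

variable {α : Type*}

def toList (x : FreeSemigroup α) : List α := x.head :: x.tail

@[simp] theorem toList_of (a : α) : (of a).toList = [a] := rfl

@[simp] theorem toList_mul (x y : FreeSemigroup α) : (x * y).toList = x.toList ++ y.toList := rfl

theorem toList_ne_nil (x : FreeSemigroup α) : x.toList ≠ [] := List.cons_ne_nil _ _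

theorem pairwise_toList_of_mem_FP [Preorder α] {s : ℕ → α} (hs : StrictMono s)
    {x : FreeSemigroup α} (hx : x ∈ Hindman.FP fun n => of (s n)) :
    x.toList.Pairwise (· < ·) ∧ ∀ i ∈ x.toList, s 0 ≤ i := by
  generalize ha : (fun n => of (s n) : Stream' (FreeSemigroup α)) = a at hx
  induction hx generalizing s with
  | head' a => subst ha; simp [Stream'.head, Stream'.get]
  | tail' a x _ ih =>
    subst ha
    obtain ⟨hsorted, hge⟩ := ih (fun _ _ h => hs (Nat.succ_lt_succ h)) rfl
    exact ⟨hsorted, fun i hi => (hs.monotone (Nat.zero_le 1)).trans (hge i hi)⟩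
  | cons' a x _ ih =>
    subst ha
    obtain ⟨hsorted, hge⟩ := ih (fun _ _ h => hs (Nat.succ_lt_succ h)) rfl
    have hlt : ∀ i ∈ x.toList, s 0 < i := fun i hi => (hs Nat.zero_lt_one).trans_le (hge i hi)
    refine ⟨List.pairwise_cons.2 ⟨hlt, hsorted⟩, ?_⟩
    rintro i (_ | ⟨_, hi⟩)
    exacts [le_rfl, (hlt i hi).le]

theorem exists_mem_FP_toList_eq_flatMap (b : Stream' (FreeSemigroup α)) {ks : List ℕ}
    (hne : ks ≠ []) (hks : ks.Pairwise (· < ·)) :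
    ∃ x ∈ Hindman.FP b, x.toList = ks.flatMap fun k => (b.get k).toList := by
  suffices ∀ j, (∀ k ∈ ks, j ≤ k) →
      ∃ x ∈ Hindman.FP (b.drop j), x.toList = ks.flatMap fun k => (b.get k).toList by
    simpa using this 0 (fun k _ => Nat.zero_le k)
  induction ks with
  | nil => exact absurd rfl hne
  | cons k ks ih =>
    intro j hj
    have hFP : Hindman.FP (b.drop k) ⊆ Hindman.FP (b.drop j) := by
      simpa [Stream'.drop_drop, Nat.add_sub_cancel' (hj k List.mem_cons_self)] using
        Hindman.FP_drop_subset_FP (b.drop j) (k - j)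
    rcases eq_or_ne ks [] with rfl | hks_ne
    · refine ⟨b.get k, hFP ?_, by simp⟩
      simpa using Hindman.FP.head (b.drop k)
    · obtain ⟨hlt, hsorted⟩ := List.pairwise_cons.1 hks
      obtain ⟨y, hy, hyks⟩ := ih hks_ne hsorted (k + 1) hlt
      refine ⟨b.get k * y, hFP ?_, by simp [hyks]⟩
      simpa using Hindman.FP.cons (b.drop k) y (by rwa [Stream'.tail_drop'])

end FreeSemigroup

section Patterns

variable {S : Type*} [Semigroup S]

/-- `evalPattern f [(c₁, n₁), …, (cₖ, nₖ)] d = c₁ * f n₁ * (⋯ * (cₖ * f nₖ * d))`. -/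
def evalPattern (f : ℕ → S) (p : List (S × ℕ)) (d : S) : S :=
  (p.map fun x => x.1 * f x.2).foldr (· * ·) d

@[simp] theorem evalPattern_nil (f : ℕ → S) (d : S) : evalPattern f [] d = d := rfl

@[simp] theorem evalPattern_cons (f : ℕ → S) (c : S) (n : ℕ) (p : List (S × ℕ)) (d : S) :
    evalPattern f ((c, n) :: p) d = c * f n * evalPattern f p d := rfl

theorem evalPattern_append (f : ℕ → S) (p q : List (S × ℕ)) (d : S) :
    evalPattern f (p ++ q) d = evalPattern f p (evalPattern f q d) := by
  simp [evalPattern, List.foldr_append]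

theorem interProd_eq_evalPattern (m : ℕ) (a : Fin (m + 1) → S) (t : Fin m → ℕ)
    (f : ℕ → S) :
    interProd m a t f =
      evalPattern f (List.ofFn fun j => (a j.castSucc, t j)) (a (Fin.last m)) := by
  simp [interProd, evalPattern, List.ofFn_eq_map, List.map_map, Function.comp_def]

def HasPatternOn (A : Set S) (G : Set (ℕ → S)) (L : List ℕ) : Prop :=
  ∃ p : List (S × ℕ), ∃ d : S, p.map Prod.snd = L ∧ ∀ f ∈ G, evalPattern f p d ∈ A

theorem isJSetNC_iff_hasPatternOn {A : Set S} :
    IsJSetNC A ↔ ∀ G : Set (ℕ → S), G.Finite → G.Nonempty →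
      ∃ L : List ℕ, L ≠ [] ∧ L.Pairwise (· < ·) ∧ HasPatternOn A G L := by
  constructor
  · rintro hA G hfin hne
    obtain ⟨m, hm, a, t, ht, hG⟩ := hA hfin.toFinset (by simpa using hne)
    refine ⟨List.ofFn t, by simp [hm.ne'], List.pairwise_ofFn.2 fun _ _ h => ht h,
      List.ofFn fun j => (a j.castSucc, t j), a (Fin.last m),
      by simp [List.map_ofFn, Function.comp_def], fun f hf => ?_⟩
    rw [← interProd_eq_evalPattern]
    exact hG f (by simpa using hf)
  · rintro hA F hF
    obtain ⟨L, hne, hL, p, d, rfl, hG⟩ := hA F F.finite_toSet (by simpa using hF)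
    refine ⟨p.length, List.length_pos_iff.2 (by simpa using hne),
      Fin.snoc (fun j => p[j].1) d, fun j => p[j].2, fun i j hij => ?_, fun f hf => ?_⟩
    · simpa using List.pairwise_iff_getElem.1 hL i j (by simp) (by simp) hij
    · rw [interProd_eq_evalPattern]
      simpa using hG f hf

theorem lift_mul_eq_evalPattern (ε : S) (f : ℕ → S) (w : FreeSemigroup ℕ) (d : S) :
    FreeSemigroup.lift (fun n => ε * f n) w * d = evalPattern f (w.toList.map (ε, ·)) d := by
  induction w with
  | ih1 n => simp
  | ih2 n w _ ih => simp [FreeSemigroup.lift_of_mul, mul_assoc, ih]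

theorem evalPattern_lift_blocks (ε : S) (f : ℕ → S) (b : ℕ → FreeSemigroup ℕ)
    (p : List (S × ℕ)) (d : S) :
    evalPattern (fun k => FreeSemigroup.lift (fun n => ε * f n) (b k)) p d =
      evalPattern f (p.flatMap fun x => (x.1 * ε, (b x.2).head) :: (b x.2).tail.map (ε, ·))
        d := by
  induction p with
  | nil => rfl
  | cons x p ih =>
    rw [List.flatMap_cons, evalPattern_append, ← ih, evalPattern_cons, mul_assoc,
      lift_mul_eq_evalPattern]
    simp [FreeSemigroup.toList, mul_assoc]

theorem IsJSetNC.exists_mem_FP_hasPatternOn {A : Set S} (hA : IsJSetNC A) {G : Set (ℕ → S)}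
    (hfin : G.Finite) (hne : G.Nonempty) (b : Stream' (FreeSemigroup ℕ)) :
    ∃ x ∈ Hindman.FP b, HasPatternOn A G x.toList := by
  obtain ⟨g, hg⟩ := hne
  -- any element of `S` serves as the filler `ε` inside the blocks
  let blocks (f : ℕ → S) (k : ℕ) : S := FreeSemigroup.lift (fun n => g 0 * f n) (b k)
  obtain ⟨ks, hks_ne, hks, p, d, rfl, hp⟩ := isJSetNC_iff_hasPatternOn.1 hA (blocks '' G)
    (hfin.image _) ⟨_, Set.mem_image_of_mem _ hg⟩
  obtain ⟨x, hx, hxks⟩ := FreeSemigroup.exists_mem_FP_toList_eq_flatMap b hks_ne hks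
  refine ⟨x, hx, _, d, ?_, fun f hf => evalPattern_lift_blocks (g 0) f b p d ▸
    hp _ (Set.mem_image_of_mem _ hf)⟩
  rw [hxks]
  simp [List.map_flatMap, List.flatMap_map, FreeSemigroup.toList, Function.comp_def, Stream'.get]

theorem exists_evalPattern_eq_prod {S₁ S₂ : Type*} [Semigroup S₁] [Semigroup S₂]
    {p₁ : List (S₁ × ℕ)} {p₂ : List (S₂ × ℕ)}
    (h : p₁.map Prod.snd = p₂.map Prod.snd) :
    ∃ p : List ((S₁ × S₂) × ℕ), p.map Prod.snd = p₁.map Prod.snd ∧ ∀ f d₁ d₂,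
      evalPattern f p (d₁, d₂) =
        (evalPattern (fun n => (f n).1) p₁ d₁, evalPattern (fun n => (f n).2) p₂ d₂) := by
  induction p₁ generalizing p₂ with
  | nil =>
    obtain rfl : p₂ = [] := by simpa using h.symm
    exact ⟨[], rfl, fun _ _ _ => rfl⟩
  | cons x₁ p₁ ih =>
    obtain _ | ⟨x₂, p₂⟩ := p₂
    · simp at h
    obtain ⟨hx, hp⟩ := List.cons_eq_cons.1 h
    obtain ⟨p, hp_snd, hp_eval⟩ := ih hp
    refine ⟨((x₁.1, x₂.1), x₁.2) :: p, by simp [hp_snd], fun f d₁ d₂ => ?_⟩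
    obtain ⟨c₁, n⟩ := x₁
    obtain ⟨c₂, n⟩ := x₂
    obtain rfl : _ = n := hx
    simp only [evalPattern_cons, hp_eval]
    rfl

theorem HasPatternOn.prod {S₁ S₂ : Type*} [Semigroup S₁] [Semigroup S₂]
    {A : Set S₁} {B : Set S₂} {F : Set (ℕ → S₁ × S₂)} {L : List ℕ}
    (hA : HasPatternOn A ((fun f n => (f n).1) '' F) L)
    (hB : HasPatternOn B ((fun f n => (f n).2) '' F) L) :
    HasPatternOn (A ×ˢ B) F L := by
  obtain ⟨p₁, d₁, rfl, hp₁⟩ := hA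
  obtain ⟨p₂, d₂, hL, hp₂⟩ := hB
  obtain ⟨p, hp_snd, hp_eval⟩ := exists_evalPattern_eq_prod hL.symm
  exact ⟨p, (d₁, d₂), hp_snd, fun f hf => hp_eval f d₁ d₂ ▸
    ⟨hp₁ _ (Set.mem_image_of_mem _ hf), hp₂ _ (Set.mem_image_of_mem _ hf)⟩⟩

attribute [local instance] Ultrafilter.mul

theorem IsJSetNC.setOf_hasPatternOn_mem {A : Set S} (hA : IsJSetNC A) {G : Set (ℕ → S)}
    (hfin : G.Finite) (hne : G.Nonempty) {U : Ultrafilter (FreeSemigroup ℕ)} (hU : U * U = U) :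
    {x | HasPatternOn A G x.toList} ∈ U := by
  by_contra hnot
  obtain ⟨b, hb⟩ :=
    Hindman.exists_FP_of_large U hU _ (Ultrafilter.compl_mem_iff_notMem.2 hnot)
  obtain ⟨x, hx, hxA⟩ := hA.exists_mem_FP_hasPatternOn hfin hne b
  exact hb hx hxA

end Patterns

theorem jsetNC_prod {S₁ S₂ : Type*} [Semigroup S₁] [Semigroup S₂]
    {A : Set S₁} {B : Set S₂} (hA : IsJSetNC A) (hB : IsJSetNC B) :
    IsJSetNC (A ×ˢ B) := by
  refine isJSetNC_iff_hasPatternOn.2 fun F hfin hne => ?_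
  obtain ⟨U, hU, hU_of⟩ := Hindman.exists_idempotent_ultrafilter_le_FP
    (FreeSemigroup.of : Stream' (FreeSemigroup ℕ))
  obtain ⟨b, hb⟩ := Hindman.exists_FP_of_large U hU _
    (Filter.inter_mem (hA.setOf_hasPatternOn_mem (hfin.image _) (hne.image _) hU) hU_of)
  obtain ⟨x, hx, hxB⟩ := hB.exists_mem_FP_hasPatternOn (hfin.image _) (hne.image _) b
  obtain ⟨hxA, hx_of⟩ := hb hx
  exact ⟨x.toList, x.toList_ne_nil,
    (FreeSemigroup.pairwise_toList_of_mem_FP strictMono_id hx_of).1, hxA.prod hxB⟩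
end

section
/- Let (S₁,·) and (S₂,·) be countable semigroups and let A ⊆ S₁ and B ⊆ S₂ be C-sets (defined via chains of non-commutative J-sets). Then A × B is a C-set in the product semigroup S₁ × S₂ (with coordinatewise multiplication). -/
/-- A set `A` in a countable semigroup `S` is a C-set if there is a decreasing sequence
`⟨C_n⟩` of subsets of `A` such that (1) for each `n` and each `x ∈ C_n` there is `m`
with `C_m ⊆ x⁻¹C_n`, and (2) each `C_n` is a J-set (in the non-commutative sense). -/
def IsCSetNC {S : Type*} [Semigroup S] (A : Set S) : Prop :=
  ∃ C : ℕ → Set S, (∀ n, C n ⊆ A) ∧ (∀ n, C (n + 1) ⊆ C n) ∧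
    (∀ n, ∀ x ∈ C n, ∃ m, C m ⊆ {s : S | x * s ∈ C n}) ∧
    (∀ n, IsJSetNC (C n))

/-!
If `C` and `D` are the chains witnessing that `A` and `B` are C-sets, then `C n ×ˢ D n` is a
chain for `A ×ˢ B`; the point is that each `C n ×ˢ D n` is a J-set. Given finitely many
sequences `f = (f₁, f₂)` in `S₁ × S₂`, the C-set structure of `D` yields blocks `β 0, β 1, …`:
J-set witnesses for deeper and deeper levels `D N`, each with times beyond those of the earlier
blocks, such that every product of an increasing selection of blocks, evaluated at `f₂`, lies in
`D n` (each earlier partial product `x` satisfies `x · D N ⊆ D n` for `N` large). In the first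
coordinate a block with times `t₁ < ⋯ < tᵣ` becomes the element `x f₁(t₁) x ⋯ x f₁(tᵣ) x` for a
fixed filler `x`; the J-set property of `C n` applied to these sequences of blocks selects blocks
`u₁ < ⋯ < uₘ` and separators `a`, and interleaving the two coordinates gives one witness for
`C n ×ˢ D n`.
-/

/-- The word `a₁ f(t₁) a₂ f(t₂) ⋯ aₘ f(tₘ) aₘ₊₁`, stored as `pairs = [(a₁, t₁), …, (aₘ, tₘ)]` and
`last = aₘ₊₁`; it is evaluated at a sequence `f` by `eval f`. -/
structure InterWord (S : Type*) where
  pairs : List (S × ℕ)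
  last : S

namespace InterWord

variable {S T : Type*}

def times (W : InterWord S) : List ℕ := W.pairs.map Prod.snd

def const (c : S) : InterWord S := ⟨[], c⟩

def shift (h : ℕ) (W : InterWord S) : InterWord S :=
  ⟨W.pairs.map fun p => (p.1, h + p.2), W.last⟩

def fill (x : S) (W : InterWord T) : InterWord S :=
  ⟨W.pairs.map fun p => (x, p.2), x⟩

def prod (V : InterWord S) (W : InterWord T) : InterWord (S × T) :=
  ⟨List.zipWith (fun p q => ((p.1, q.1), p.2)) V.pairs W.pairs, (V.last, W.last)⟩

def ofInterProd (m : ℕ) (a : Fin (m + 1) → S) (t : Fin m → ℕ) : InterWord S :=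
  ⟨List.ofFn fun j => (a j.castSucc, t j), a (Fin.last m)⟩

@[simp] lemma times_const (c : S) : (const c).times = [] := rfl

@[simp] lemma times_shift (h : ℕ) (W : InterWord S) : (W.shift h).times = W.times.map (h + ·) := by
  simp [shift, times]

@[simp] lemma times_fill (x : S) (W : InterWord T) : (W.fill x).times = W.times := by
  simp [fill, times, Function.comp_def]

lemma times_prod {V : InterWord S} {W : InterWord T} (h : V.times = W.times) :
    (V.prod W).times = V.times := by
  obtain ⟨v, _⟩ := V
  obtain ⟨w, _⟩ := W
  simp only [times, prod] at h ⊢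
  induction v generalizing w with
  | nil => rfl
  | cons p v ih =>
    cases w with
    | nil => simp at h
    | cons q w =>
      simp only [List.map_cons, List.cons.injEq] at h
      simp [ih w h.2]

lemma times_ofInterProd (m : ℕ) (a : Fin (m + 1) → S) (t : Fin m → ℕ) :
    (ofInterProd m a t).times = List.ofFn t := by
  simp [ofInterProd, times, List.map_ofFn, Function.comp_def]

lemma exists_eq_ofInterProd (W : InterWord S) :
    ∃ m a t, W = ofInterProd m a t :=
  ⟨_, Fin.snoc (fun j => W.pairs[j].1) W.last, fun j => W.pairs[j].2, by
    simp [ofInterProd, Fin.snoc_castSucc]⟩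

section Semigroup

variable [Semigroup S] [Semigroup T]

def eval (f : ℕ → S) (W : InterWord S) : S :=
  (W.pairs.map fun p => p.1 * f p.2).foldr (· * ·) W.last

@[simp] lemma eval_const (f : ℕ → S) (c : S) : (const c).eval f = c := rfl

@[simp] lemma eval_cons (f : ℕ → S) (p : S × ℕ) (w : List (S × ℕ)) (z : S) :
    eval f ⟨p :: w, z⟩ = p.1 * f p.2 * eval f ⟨w, z⟩ := rfl

lemma eval_append (f : ℕ → S) (v w : List (S × ℕ)) (z : S) :
    eval f ⟨v ++ w, z⟩ = eval f ⟨v, eval f ⟨w, z⟩⟩ := by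
  simp [eval, List.foldr_append]

lemma eval_mul_last (f : ℕ → S) (w : List (S × ℕ)) (z y : S) :
    eval f ⟨w, z * y⟩ = eval f ⟨w, z⟩ * y := by
  induction w with
  | nil => rfl
  | cons p w ih => simp [ih, mul_assoc]

lemma eval_shift (f : ℕ → S) (h : ℕ) (W : InterWord S) :
    (W.shift h).eval f = W.eval fun k => f (h + k) := by
  simp [shift, eval, Function.comp_def]

lemma eval_ofInterProd (f : ℕ → S) (m : ℕ) (a : Fin (m + 1) → S) (t : Fin m → ℕ) :
    (ofInterProd m a t).eval f = interProd m a t f := by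
  simp [ofInterProd, eval, interProd, List.ofFn_eq_map, Function.comp_def]

lemma eval_prod (f : ℕ → S × T) {V : InterWord S} {W : InterWord T} (h : V.times = W.times) :
    (V.prod W).eval f = (V.eval fun k => (f k).1, W.eval fun k => (f k).2) := by
  obtain ⟨v, _⟩ := V
  obtain ⟨w, _⟩ := W
  simp only [times, prod] at h ⊢
  induction v generalizing w with
  | nil =>
    cases w with
    | nil => rfl
    | cons => simp at h
  | cons p v ih =>
    cases w with
    | nil => simp at h
    | cons q w =>
      simp only [List.map_cons, List.cons.injEq] at h
      simp [ih w h.2, h.1]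
      rfl

def lmul (c : S) : InterWord S → InterWord S
  | ⟨[], z⟩ => ⟨[], c * z⟩
  | ⟨(s, t) :: w, z⟩ => ⟨(c * s, t) :: w, z⟩

instance : Mul (InterWord S) :=
  ⟨fun V W => ⟨V.pairs ++ (W.lmul V.last).pairs, (W.lmul V.last).last⟩⟩

lemma mul_def (V W : InterWord S) :
    V * W = ⟨V.pairs ++ (W.lmul V.last).pairs, (W.lmul V.last).last⟩ := rfl

lemma lmul_lmul (c d : S) (W : InterWord S) : (W.lmul d).lmul c = W.lmul (c * d) := by
  obtain ⟨_ | ⟨⟨s, t⟩, w⟩, z⟩ := W <;> simp [lmul, mul_assoc]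

lemma const_mul (c : S) (W : InterWord S) : const c * W = W.lmul c := rfl

lemma lmul_mul (c : S) (V W : InterWord S) : (V * W).lmul c = V.lmul c * W := by
  obtain ⟨_ | ⟨⟨s, t⟩, v⟩, z⟩ := V
  · change (const z * W).lmul c = const (c * z) * W
    rw [const_mul, const_mul, lmul_lmul]
  · rfl

instance : Semigroup (InterWord S) where
  mul_assoc U V W := by
    rw [mul_def U (V * W), lmul_mul, mul_def (U * V), mul_def U V, mul_def (V.lmul U.last)]
    simp

lemma eval_lmul (f : ℕ → S) (c : S) (W : InterWord S) : (W.lmul c).eval f = c * W.eval f := by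
  obtain ⟨_ | ⟨⟨s, t⟩, w⟩, z⟩ := W
  · rfl
  · simp [lmul, mul_assoc]

lemma eval_mul (f : ℕ → S) (V W : InterWord S) : (V * W).eval f = V.eval f * W.eval f := by
  rw [mul_def, eval_append, eval_lmul, eval_mul_last]

def evalHom (f : ℕ → S) : InterWord S →ₙ* S where
  toFun := eval f
  map_mul' := eval_mul f

lemma times_lmul (c : S) (W : InterWord S) : (W.lmul c).times = W.times := by
  obtain ⟨_ | ⟨⟨s, t⟩, w⟩, z⟩ := W <;> rfl

@[simp] lemma times_mul (V W : InterWord S) : (V * W).times = V.times ++ W.times := by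
  simpa [mul_def, times] using times_lmul V.last W

lemma times_foldl_mul (B : InterWord S) (l : List (InterWord S)) :
    (l.foldl (· * ·) B).times = (B :: l).flatMap times := by
  induction l generalizing B with
  | nil => simp
  | cons V l ih => simp [ih]

lemma times_foldr_mul (B : InterWord S) (l : List (InterWord S)) :
    (l.foldr (· * ·) B).times = l.flatMap times ++ B.times := by
  induction l with
  | nil => simp
  | cons V l ih => simp [ih]

lemma times_interProd_const (m : ℕ) (a : Fin (m + 1) → S) (t : Fin m → ℕ)
    (γ : ℕ → InterWord S) :
    (interProd m (fun i => const (a i)) t γ).times =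
      (List.ofFn t).flatMap fun k => (γ k).times := by
  rw [interProd, times_foldr_mul]
  simp [List.ofFn_eq_map, List.flatMap_map]

end Semigroup

lemma map_interProd {S T : Type*} [Semigroup S] [Semigroup T] (φ : S →ₙ* T) (m : ℕ)
    (a : Fin (m + 1) → S) (t : Fin m → ℕ) (f : ℕ → S) :
    φ (interProd m a t f) = interProd m (φ ∘ a) t (φ ∘ f) := by
  simp only [interProd, List.foldr_map, Function.comp_apply]
  exact (List.foldr_hom φ fun j y => by simp [map_mul]).symm

end InterWord

open InterWord

lemma isJSetNC_iff_exists_word {S : Type*} [Semigroup S] {A : Set S} :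
    IsJSetNC A ↔ ∀ F : Finset (ℕ → S), F.Nonempty → ∃ W : InterWord S,
      W.times ≠ [] ∧ W.times.Pairwise (· < ·) ∧ ∀ f ∈ F, W.eval f ∈ A := by
  refine forall₂_congr fun F _ => ⟨?_, ?_⟩
  · rintro ⟨m, hm, a, t, ht, hA⟩
    refine ⟨ofInterProd m a t, ?_, ?_, fun f hf => ?_⟩
    · simpa [times_ofInterProd] using hm.ne'
    · exact (times_ofInterProd m a t).symm ▸ List.pairwise_ofFn.2 ht
    · simpa [eval_ofInterProd] using hA f hf
  · rintro ⟨W, hne, hlt, hA⟩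
    obtain ⟨m, a, t, rfl⟩ := W.exists_eq_ofInterProd
    rw [times_ofInterProd] at hne hlt
    refine ⟨_, ?_, a, t, List.pairwise_ofFn.1 hlt, fun f hf => ?_⟩
    · simpa [Nat.pos_iff_ne_zero] using hne
    · simpa [eval_ofInterProd] using hA f hf

open Filter

section Blocks

variable {S : Type*} [Semigroup S]

lemma IsJSetNC.exists_word_ge {A : Set S} (hA : IsJSetNC A) {F : Finset (ℕ → S)}
    (hF : F.Nonempty) (h : ℕ) :
    ∃ W : InterWord S, W.times ≠ [] ∧ W.times.Pairwise (· < ·) ∧ (∀ t ∈ W.times, h ≤ t) ∧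
      ∀ f ∈ F, W.eval f ∈ A := by
  classical
  obtain ⟨W, hne, hlt, hW⟩ :=
    isJSetNC_iff_exists_word.1 hA (F.image fun f k => f (h + k)) (hF.image _)
  refine ⟨W.shift h, by simpa using hne, ?_, by simp, fun f hf => ?_⟩
  · simpa [List.pairwise_map] using hlt
  · rw [eval_shift]
    exact hW _ (Finset.mem_image_of_mem _ hf)

lemma eventually_forall_mul_mem {D : ℕ → Set S} (hD : Antitone D) {n : ℕ} {x : S}
    (hx : ∃ m, D m ⊆ {s | x * s ∈ D n}) : ∀ᶠ N in atTop, ∀ s ∈ D N, x * s ∈ D n := by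
  obtain ⟨m, hm⟩ := hx
  filter_upwards [eventually_ge_atTop m] with N hN s hs using hm (hD hN hs)

structure IsBlockList (A : Set S) (F : Finset (ℕ → S)) (L : List (InterWord S)) : Prop where
  times_ne_nil : ∀ W ∈ L, W.times ≠ []
  pairwise_times : (L.flatMap times).Pairwise (· < ·)
  eval_mem : ∀ B sel, (B :: sel).Sublist L → ∀ f ∈ F, (sel.foldl (· * ·) B).eval f ∈ A

lemma isBlockList_nil (A : Set S) (F : Finset (ℕ → S)) : IsBlockList A F [] :=
  ⟨by simp, by simp, fun _ _ h => absurd (List.eq_nil_of_sublist_nil h) (List.cons_ne_nil _ _)⟩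

lemma IsBlockList.exists_append {D : ℕ → Set S} (hD : Antitone D) {n : ℕ}
    (hsh : ∀ x ∈ D n, ∃ m, D m ⊆ {s | x * s ∈ D n}) (hJ : ∀ k, IsJSetNC (D k))
    {F : Finset (ℕ → S)} (hF : F.Nonempty) {L : List (InterWord S)}
    (hL : IsBlockList (D n) F L) : ∃ W, IsBlockList (D n) F (L ++ [W]) := by
  set sels := {p : InterWord S × List (InterWord S) | (p.1 :: p.2).Sublist L}
  have hsels : sels.Finite := by
    refine ((List.finite_toSet L.sublists).preimage
      (f := fun p : InterWord S × List (InterWord S) => p.1 :: p.2) fun p _ q _ h => ?_).subset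
      fun p hp => List.mem_sublists.2 hp
    simp only [List.cons.injEq] at h
    exact Prod.ext h.1 h.2
  obtain ⟨N, hnN, hN⟩ : ∃ N, n ≤ N ∧ ∀ p ∈ sels, ∀ f ∈ F, ∀ s ∈ D N,
      (p.2.foldl (· * ·) p.1).eval f * s ∈ D n :=
    ((eventually_ge_atTop n).and <| (eventually_all_finite hsels).2 fun p hp =>
      (eventually_all_finset F).2 fun f hf =>
        eventually_forall_mul_mem hD (hsh _ (hL.eval_mem _ _ hp f hf))).exists
  obtain ⟨W, hne, hlt, hge, hW⟩ := (hJ N).exists_word_ge hF ((L.flatMap times).sum + 1)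
  refine ⟨W, ⟨?_, ?_, ?_⟩⟩
  · simpa [or_imp, forall_and] using ⟨hL.times_ne_nil, hne⟩
  · rw [List.flatMap_append, List.pairwise_append]
    refine ⟨hL.pairwise_times, by simpa using hlt, fun a ha b hb => ?_⟩
    have := List.le_sum_of_mem ha
    have := hge b (by simpa using hb)
    omega
  · intro B sel hsub f hf
    obtain ⟨l₁, l₂, heq, h₁, h₂⟩ := List.sublist_append_iff.1 hsub
    rcases List.sublist_singleton.1 h₂ with rfl | rfl
    · rw [List.append_nil] at heq
      exact hL.eval_mem B sel (heq ▸ h₁) f hf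
    · cases l₁ with
      | nil =>
        obtain ⟨rfl, rfl⟩ := List.cons.inj heq
        exact hD hnN (hW f hf)
      | cons B' sel' =>
        obtain ⟨rfl, rfl⟩ := List.cons.inj heq
        simp only [List.append_eq, List.foldl_append, List.foldl_cons, List.foldl_nil, eval_mul]
        exact hN (B, sel') h₁ f hf _ (hW f hf)

end Blocks

lemma exists_seq_forall_range_map {α : Type*} {P : List α → Prop} (h₀ : P [])
    (h : ∀ L, P L → ∃ a, P (L ++ [a])) : ∃ β : ℕ → α, ∀ K, P ((List.range K).map β) := by
  choose g hg using h
  let pre : ℕ → {L // P L} := fun K =>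
    Nat.rec ⟨[], h₀⟩ (fun _ L => ⟨L.1 ++ [g L.1 L.2], hg L.1 L.2⟩) K
  refine ⟨fun k => g (pre k).1 (pre k).2, fun K => ?_⟩
  have hpre : ∀ K, (pre K).1 = (List.range K).map fun k => g (pre k).1 (pre k).2 := by
    intro K
    induction K with
    | zero => rfl
    | succ K ih =>
      rw [List.range_succ, List.map_append, ← ih]
      rfl
  exact hpre K ▸ (pre K).2

lemma List.ofFn_sublist_range {m : ℕ} {u : Fin (m + 1) → ℕ} (hu : StrictMono u) :
    (List.ofFn u).Sublist (List.range (u (Fin.last m) + 1)) := by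
  refine List.sublist_of_subperm_of_pairwise
    (List.subperm_of_subset (List.nodup_ofFn.2 hu.injective) fun k hk => ?_)
    (List.pairwise_ofFn.2 hu) List.pairwise_lt_range
  obtain ⟨j, rfl⟩ := List.mem_ofFn.1 hk
  exact List.mem_range.2 (Nat.lt_succ_of_le (hu.monotone (Fin.le_last j)))

theorem IsJSetNC.prod {S₁ S₂ : Type*} [Semigroup S₁] [Semigroup S₂] {C : Set S₁}
    (hC : IsJSetNC C) {D : ℕ → Set S₂} (hD : Antitone D) {n : ℕ}
    (hsh : ∀ x ∈ D n, ∃ m, D m ⊆ {s | x * s ∈ D n}) (hJ : ∀ k, IsJSetNC (D k)) :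
    IsJSetNC (C ×ˢ D n) := by
  classical
  rw [isJSetNC_iff_exists_word]
  rintro F ⟨f₀, hf₀⟩
  obtain ⟨β, hβ⟩ := exists_seq_forall_range_map (isBlockList_nil _ _) fun _ hL =>
    hL.exists_append hD hsh hJ ⟨_, Finset.mem_image_of_mem (fun f k => (f k).2) hf₀⟩
  set γ : ℕ → InterWord S₁ := fun k => (β k).fill (f₀ 0).1
  obtain ⟨m, hm, a, u, hu, hCu⟩ := hC (F.image fun f k => (γ k).eval fun i => (f i).1)
    ⟨_, Finset.mem_image_of_mem _ hf₀⟩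
  obtain ⟨m, rfl⟩ : ∃ m', m = m' + 1 := ⟨m - 1, by omega⟩
  set W₁ : InterWord S₁ := interProd (m + 1) (fun i => const (a i)) u γ
  set W₂ : InterWord S₂ := ((List.ofFn fun j : Fin m => u j.succ).map β).foldl (· * ·) (β (u 0))
  have hblocks := hβ (u (Fin.last m) + 1)
  have hsub : (β (u 0) :: (List.ofFn fun j : Fin m => u j.succ).map β).Sublist
      ((List.range (u (Fin.last m) + 1)).map β) := by
    rw [← List.map_cons, ← List.ofFn_succ]
    exact (List.ofFn_sublist_range hu).map β
  have htimes : W₁.times = W₂.times := by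
    rw [times_interProd_const, times_foldl_mul, ← List.map_cons, ← List.ofFn_succ, List.flatMap_map]
    simp [γ]
  refine ⟨W₁.prod W₂, ?_, ?_, fun f hf => ?_⟩
  · rw [times_prod htimes, htimes, times_foldl_mul]
    simp [hblocks.times_ne_nil _ (hsub.subset List.mem_cons_self)]
  · rw [times_prod htimes, htimes, times_foldl_mul]
    exact hblocks.pairwise_times.sublist (hsub.flatMap _)
  · rw [eval_prod f htimes]
    refine ⟨?_, hblocks.eval_mem _ _ hsub _ (Finset.mem_image_of_mem _ hf)⟩
    change evalHom (fun k => (f k).1) W₁ ∈ C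
    rw [map_interProd]
    exact hCu _ (Finset.mem_image_of_mem _ hf)

theorem csetNC_prod_general {S₁ S₂ : Type*} [Semigroup S₁] [Semigroup S₂]
    {A : Set S₁} {B : Set S₂} (hA : IsCSetNC A) (hB : IsCSetNC B) :
    IsCSetNC (A ×ˢ B) := by
  obtain ⟨C, hCA, hC, hCsh, hCJ⟩ := hA
  obtain ⟨D, hDB, hD, hDsh, hDJ⟩ := hB
  have hC : Antitone C := antitone_nat_of_succ_le hC
  have hD : Antitone D := antitone_nat_of_succ_le hD
  refine ⟨fun n => C n ×ˢ D n, fun n => Set.prod_mono (hCA n) (hDB n),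
    fun n => Set.prod_mono (hC n.le_succ) (hD n.le_succ), ?_,
    fun n => (hCJ n).prod hD (hDsh n) hDJ⟩
  rintro n ⟨x, y⟩ ⟨hx, hy⟩
  obtain ⟨m₁, hm₁⟩ := hCsh n x hx
  obtain ⟨m₂, hm₂⟩ := hDsh n y hy
  exact ⟨max m₁ m₂, fun s hs =>
    ⟨hm₁ (hC (le_max_left _ _) hs.1), hm₂ (hD (le_max_right _ _) hs.2)⟩⟩

theorem csetNC_prod {S₁ S₂ : Type*} [Semigroup S₁] [Semigroup S₂]
    [Countable S₁] [Countable S₂]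
    {A : Set S₁} {B : Set S₂} (hA : IsCSetNC A) (hB : IsCSetNC B) :
    IsCSetNC (A ×ˢ B) :=
  csetNC_prod_general hA hB
end

section
/- Let (S,·) be a semigroup, let A ⊆ S be a J-set (in the non-commutative sense), let F be a finite nonempty set of sequences f : ℕ → S, and let ⟨x_n⟩_{n=1}^∞ be a sequence in ℕ. Then there exists a sequence ⟨y_n⟩_{n=1}^∞ with FS(⟨y_n⟩_{n=1}^∞) ⊆ FS(⟨x_n⟩_{n=1}^∞) such that every element of FS(⟨y_n⟩_{n=1}^∞), say Σ_{t∈G} x_t with G ⊆ ℕ finite nonempty and G = {t₁ < t₂ < … < t_m}, admits a = (a₁,…,a_{m+1}) ∈ S^{m+1} with a₁·f(x_{t₁})·a₂·f(x_{t₂})·…·a_m·f(x_{t_m})·a_{m+1} ∈ A for every f ∈ F. -/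
/-- `FS(⟨x_n⟩) = {∑_{n ∈ G} x_n : G a finite nonempty subset of ℕ}`. -/
def FS (x : ℕ → ℕ) : Set ℕ :=
  {s : ℕ | ∃ G : Finset ℕ, G.Nonempty ∧ s = ∑ n ∈ G, x n}

/-!
Colour each finite `G ⊆ ℕ` by whether it admits such an `a`. Hindman's theorem in the semigroup
of finite sets under ordered union gives blocks `H₀ < H₁ < ⋯` all of whose finite unions have the
same colour, and `y n = ∑ t ∈ H n, x t` works as soon as that colour is the good one. It is: the
J-set property, applied to the sequences `n ↦ s₀·f(x d₁)·s₀·f(x d₂)⋯s₀·f(x d_r)` where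
`H n = {d₁ < ⋯ < d_r}`, produces a union of blocks `H (t 1) ∪ ⋯ ∪ H (t m)` that admits an `a`.
-/

open Finset

section Blocks

variable {α : Type*} [LinearOrder α]

open Hindman

def BlockLT (G H : Finset α) : Prop := ∀ p ∈ G, ∀ q ∈ H, p < q

instance : DecidableRel (BlockLT (α := α)) := fun G H => by unfold BlockLT; infer_instance

theorem blockLT_union_left {G H K : Finset α} :
    BlockLT (G ∪ H) K ↔ BlockLT G K ∧ BlockLT H K := by
  simp only [BlockLT, mem_union, or_imp, forall_and]

theorem blockLT_union_right {G H K : Finset α} :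
    BlockLT G (H ∪ K) ↔ BlockLT G H ∧ BlockLT G K := by
  simp only [BlockLT, mem_union, or_imp, forall_and]

theorem BlockLT.disjoint {G H : Finset α} (h : BlockLT G H) : Disjoint G H :=
  disjoint_left.mpr fun p hG hH => lt_irrefl p (h p hG p hH)

theorem sum_biUnion_of_blockLT {M : Type*} [AddCommMonoid M] {B : ℕ → Finset α}
    (hB : ∀ i j, i < j → BlockLT (B i) (B j)) (T : Finset ℕ) (f : α → M) :
    ∑ p ∈ T.biUnion B, f p = ∑ n ∈ T, ∑ p ∈ B n, f p := by
  refine sum_biUnion fun i _ j _ hij => ?_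
  rcases hij.lt_or_gt with h | h
  exacts [(hB i j h).disjoint, (hB j i h).disjoint.symm]

/-- Finite sets under `G * H = G ∪ H` when `G` lies below `H`; `zero` absorbs every other
product, so a product of blocks that is not `zero` comes from increasing blocks. -/
inductive OrderedUnion (α : Type*)
  | zero
  | block (G : Finset α)

namespace OrderedUnion

instance : Mul (OrderedUnion α) where
  mul
    | block G, block H => if BlockLT G H then block (G ∪ H) else zero
    | _, _ => zero

theorem block_mul_block (G H : Finset α) :
    block G * block H = if BlockLT G H then block (G ∪ H) else zero := rfl

instance : Semigroup (OrderedUnion α) where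
  mul_assoc := by
    rintro (_ | G) (_ | H) (_ | K) <;> try rfl
    · show ite _ _ _ * zero = zero
      split_ifs <;> rfl
    · simp only [block_mul_block]
      by_cases hGH : BlockLT G H <;> by_cases hHK : BlockLT H K <;>
        simp [hGH, hHK, block_mul_block, blockLT_union_left, blockLT_union_right, union_assoc] <;>
        rfl

theorem block_biUnion_mem_FP {B : ℕ → Finset α} (hB : ∀ i j, i < j → BlockLT (B i) (B j))
    {T : Finset ℕ} (hT : T.Nonempty) : block (T.biUnion B) ∈ FP fun n => block (B n) := by
  let b : Stream' (OrderedUnion α) := fun n => block (B n)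
  suffices h : ∀ n, (∀ i ∈ T, n ≤ i) → block (T.biUnion B) ∈ FP (b.drop n) from h 0 (by simp)
  induction T using Finset.induction_on_min with
  | empty => exact absurd hT (by simp)
  | insert a s has ih =>
    intro n hn
    have hdrop := FP_drop_subset_FP (b.drop n) (a - n)
    rw [Stream'.drop_drop, Nat.add_sub_cancel' (hn a (mem_insert_self a s))] at hdrop
    apply hdrop
    rcases s.eq_empty_or_nonempty with rfl | hs
    · rw [insert_empty_eq, singleton_biUnion]
      have hhead := FP.head (b.drop a)
      rwa [Stream'.head_drop] at hhead
    · have hBa : BlockLT (B a) (s.biUnion B) := fun p hp q hq => by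
        obtain ⟨i, hi, hqi⟩ := mem_biUnion.mp hq
        exact hB a i (has i hi) p hp q hqi
      have hcons := FP.cons (b.drop a) _ (Stream'.tail_drop' ▸ ih hs (a + 1) has)
      rwa [Stream'.head_drop, Stream'.get, block_mul_block, if_pos hBa, ← biUnion_insert] at hcons

theorem exists_blockLT_of_FP_subset {b : Stream' (OrderedUnion α)} {Q : Finset α → Prop}
    (h : FP b ⊆ {u | ∃ G, Q G ∧ u = block G}) :
    ∃ B : ℕ → Finset α, (∀ i j, i < j → BlockLT (B i) (B j)) ∧
      ∀ T : Finset ℕ, T.Nonempty → Q (T.biUnion B) := by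
  choose B hQB hbB using fun n => h (FP.singleton b n)
  have hb : b = fun n => block (B n) := funext hbB
  have hB : ∀ i j, i < j → BlockLT (B i) (B j) := by
    intro i j hij
    obtain ⟨G, -, hG⟩ := h (FP.mul_two b i j hij)
    rw [hb] at hG
    by_contra hBij
    simp [Stream'.get, block_mul_block, hBij] at hG
  refine ⟨B, hB, fun T hT => ?_⟩
  obtain ⟨G, hG, hTG⟩ := h (hb ▸ block_biUnion_mem_FP hB hT)
  exact (block.inj hTG) ▸ hG

theorem exists_eq_block_of_mem_FP_singletons (n : ℕ) {u : OrderedUnion ℕ}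
    (h : u ∈ FP fun k => block {n + k}) :
    ∃ G : Finset ℕ, G.Nonempty ∧ (∀ p ∈ G, n ≤ p) ∧ u = block G := by
  generalize ha : (fun k => block {n + k} : Stream' (OrderedUnion ℕ)) = a at h
  have hshift : ∀ n (a : Stream' (OrderedUnion ℕ)), (fun k => block {n + k}) = a →
      (fun k => block {n + 1 + k} : Stream' (OrderedUnion ℕ)) = a.tail := by
    rintro n a rfl
    funext k
    simp [Stream'.tail, Stream'.get, add_right_comm, add_assoc]
  induction h generalizing n with
  | head' a =>
    subst ha
    exact ⟨{n}, singleton_nonempty n, by simp, rfl⟩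
  | tail' a m h ih =>
    obtain ⟨G, hG, hnG, rfl⟩ := ih (n + 1) (hshift n a ha)
    exact ⟨G, hG, fun p hp => (hnG p hp).trans' n.le_succ, rfl⟩
  | cons' a m h ih =>
    obtain ⟨G, hG, hnG, rfl⟩ := ih (n + 1) (hshift n a ha)
    subst ha
    have hnG' : BlockLT {n} G := by simpa [BlockLT] using hnG
    refine ⟨{n} ∪ G, by simp, by simpa using fun p hp => (hnG p hp).trans' n.le_succ, ?_⟩
    simp [Stream'.head, Stream'.get, block_mul_block, hnG']

end OrderedUnion

open OrderedUnion in
theorem exists_blockLT_forall_biUnion (P : Finset ℕ → Prop) :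
    ∃ B : ℕ → Finset ℕ, (∀ i j, i < j → BlockLT (B i) (B j)) ∧
      ((∀ T : Finset ℕ, T.Nonempty → (T.biUnion B).Nonempty ∧ P (T.biUnion B)) ∨
        ∀ T : Finset ℕ, T.Nonempty → (T.biUnion B).Nonempty ∧ ¬P (T.biUnion B)) := by
  let c (Q : Finset ℕ → Prop) : Set (OrderedUnion ℕ) := {u | ∃ G, (G.Nonempty ∧ Q G) ∧ u = block G}
  have hcover : FP (fun k => block {k}) ⊆ ⋃₀ {c P, c (¬P ·)} := by
    intro u hu
    obtain ⟨G, hG, -, rfl⟩ := exists_eq_block_of_mem_FP_singletons 0 (by simpa using hu)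
    by_cases hPG : P G
    · exact ⟨c P, by simp, G, ⟨hG, hPG⟩, rfl⟩
    · exact ⟨c (¬P ·), by simp, G, ⟨hG, hPG⟩, rfl⟩
  obtain ⟨_, hc, b, hb⟩ := FP_partition_regular _ _ (by simp) hcover
  rcases hc with rfl | rfl
  · obtain ⟨B, hB, hPB⟩ := exists_blockLT_of_FP_subset hb
    exact ⟨B, hB, Or.inl hPB⟩
  · obtain ⟨B, hB, hPB⟩ := exists_blockLT_of_FP_subset hb
    exact ⟨B, hB, Or.inr hPB⟩

end Blocks

theorem sort_biUnion_univ {α : Type*} [LinearOrder α] {m : ℕ} {C : Fin m → Finset α}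
    (hC : ∀ i j, i < j → BlockLT (C i) (C j)) :
    (univ.biUnion C).sort = (List.ofFn fun j => (C j).sort).flatten := by
  have hsorted : (List.ofFn fun j => (C j).sort).flatten.Pairwise (· < ·) :=
    List.pairwise_flatten.mpr
      ⟨by simpa [List.mem_ofFn] using fun j => (C j).sortedLT_sort.pairwise,
        List.pairwise_ofFn.mpr fun i j hij p hp q hq =>
          hC i j hij p ((mem_sort _).mp hp) q ((mem_sort _).mp hq)⟩
  have hunion : (List.ofFn fun j => (C j).sort).flatten.toFinset = univ.biUnion C := by
    ext p
    simp [List.mem_flatten, List.mem_ofFn]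
  rw [← hunion]
  exact (List.toFinset_sort _ hsorted.nodup).mpr (hsorted.imp le_of_lt)

section Weave

variable {S : Type*} [Semigroup S]

/-- Valued in `WithOne S` since `S` need not contain the empty word. -/
def weave (φ : ℕ → S) (P : List (S × ℕ)) : WithOne S :=
  (P.map fun q => (q.1 : WithOne S) * φ q.2).prod

@[simp] theorem weave_nil (φ : ℕ → S) : weave φ [] = 1 := rfl

@[simp] theorem weave_cons (φ : ℕ → S) (q : S × ℕ) (P : List (S × ℕ)) :
    weave φ (q :: P) = q.1 * φ q.2 * weave φ P := by
  simp [weave]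

@[simp] theorem weave_append (φ : ℕ → S) (P P' : List (S × ℕ)) :
    weave φ (P ++ P') = weave φ P * weave φ P' := by
  simp [weave]

theorem coe_foldr_mul (l : List S) (e : S) :
    ((l.foldr (· * ·) e : S) : WithOne S) = (l.map (↑)).prod * e := by
  induction l with
  | nil => simp
  | cons s l ih => simp [ih, mul_assoc]

theorem coe_foldl_mul (l : List S) (s : S) :
    ((l.foldl (· * ·) s : S) : WithOne S) = s * (l.map (↑)).prod := by
  induction l generalizing s with
  | nil => simp
  | cons c l ih => simp [ih, mul_assoc]

theorem coe_interProd (m : ℕ) (a : Fin (m + 1) → S) (t : Fin m → ℕ) (φ : ℕ → S) :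
    ((interProd m a t φ : S) : WithOne S)
      = weave φ (List.ofFn fun j => (a j.castSucc, t j)) * a (Fin.last m) := by
  simp [interProd, coe_foldr_mul, weave, Function.comp_def, List.ofFn_eq_map]

theorem weave_flatMap {φ ψ : ℕ → S} {E : S × ℕ → List (S × ℕ)} {Q : List (S × ℕ)}
    (h : ∀ q ∈ Q, q.1 * ψ q.2 = weave φ (E q)) : weave ψ Q = weave φ (Q.flatMap E) := by
  induction Q with
  | nil => rfl
  | cons q Q ih =>
    simp only [List.mem_cons, forall_eq_or_imp] at h
    simp [h.1, ih h.2]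

theorem weave_modifyHead (φ : ℕ → S) (s : S) {P : List (S × ℕ)} (hP : P ≠ []) :
    weave φ (P.modifyHead fun q => (s * q.1, q.2)) = s * weave φ P := by
  obtain ⟨q, P, rfl⟩ := List.exists_cons_of_ne_nil hP
  simp [mul_assoc]

theorem exists_interProd_eq_weave (x : ℕ → ℕ) {G : Finset ℕ} {P : List (S × ℕ)}
    (hP : P.map Prod.snd = G.sort) (e : S) :
    ∃ a : Fin (G.card + 1) → S, ∀ f : ℕ → S,
      ((interProd G.card a (fun j => x ((G.orderIsoOfFin rfl j : ℕ))) f : S) : WithOne S)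
        = weave (f ∘ x) P * e := by
  have hlen : P.length = G.card := by rw [← List.length_map Prod.snd, hP, length_sort]
  refine ⟨Fin.snoc (α := fun _ => S) (fun i => (P[i.val]'(hlen.symm ▸ i.2)).1) e, fun f => ?_⟩
  rw [coe_interProd, Fin.snoc_last]
  congr 1
  simp only [weave]
  congr 1
  refine List.ext_getElem (by simp [hlen]) fun i h₁ h₂ => ?_
  have hiP : i < P.length := by simpa using h₂
  have hi : P[i].2 = G.sort[i]'(by simpa [hlen] using hiP) := by simp [← hP]
  simp [Finset.orderEmbOfFin_apply, hi]

end Weave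

section JSet

variable {S : Type*} [Semigroup S]

def InterProdAdmissible (A : Set S) (F : Finset (ℕ → S)) (x : ℕ → ℕ) (G : Finset ℕ) : Prop :=
  ∃ a : Fin (G.card + 1) → S,
    ∀ f ∈ F, interProd G.card a (fun j => x ((G.orderIsoOfFin rfl j : ℕ))) f ∈ A

theorem exists_interProdAdmissible_biUnion {A : Set S} (hA : IsJSetNC A) {F : Finset (ℕ → S)}
    (hF : F.Nonempty) (x : ℕ → ℕ) {C : ℕ → Finset ℕ} (hne : ∀ k, (C k).Nonempty)
    (hC : ∀ i j, i < j → BlockLT (C i) (C j)) :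
    ∃ T : Finset ℕ, T.Nonempty ∧ InterProdAdmissible A F x (T.biUnion C) := by
  classical
  obtain ⟨f₀, -⟩ := id hF
  let s₀ := f₀ 0
  let R (k : ℕ) : List (S × ℕ) := (C k).sort.map (s₀, ·)
  have hR : ∀ k, R k ≠ [] := fun k => List.length_pos_iff.mp (by simpa [R] using (hne k).card_pos)
  -- The block `C k` as a single letter; its leading `s₀` (`S` need not have a unit) is merged into
  -- the separator `a j` in front of it by `E`.
  let g (f : ℕ → S) (k : ℕ) : S := ((R k).map fun q => q.1 * f (x q.2)).foldl (· * ·) s₀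
  have hg : ∀ f k, (g f k : WithOne S) = s₀ * weave (f ∘ x) (R k) := by
    intro f k
    simp [g, coe_foldl_mul, weave, Function.comp_def]
  obtain ⟨m, hm, a, t, ht, hat⟩ := hA (F.image g) (hF.image g)
  let E (q : S × ℕ) : List (S × ℕ) := (R q.2).modifyHead fun p => (q.1 * s₀ * p.1, p.2)
  have hE : ∀ q, (E q).map Prod.snd = (C q.2).sort := fun q => by
    cases hq : (C q.2).sort <;> simp [E, R, hq]
  let Q := List.ofFn fun j => (a j.castSucc, t j)
  have hQ : (Q.flatMap E).map Prod.snd = ((univ.image t).biUnion C).sort := by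
    rw [image_biUnion, sort_biUnion_univ fun i j hij => hC _ _ (ht hij)]
    simp [Q, hE, List.flatMap_def, List.map_ofFn, Function.comp_def]
  obtain ⟨a', ha'⟩ := exists_interProd_eq_weave x hQ (a (Fin.last m))
  refine ⟨univ.image t, univ_nonempty_iff.mpr ⟨⟨0, hm⟩⟩ |>.image t, a', fun f hf => ?_⟩
  have hflat : weave (g f) Q = weave (f ∘ x) (Q.flatMap E) := weave_flatMap fun q _ => by
    rw [hg, weave_modifyHead _ _ (hR q.2), WithOne.coe_mul, mul_assoc]
  have key := ha' f
  rw [← hflat, ← coe_interProd, WithOne.coe_inj] at key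
  rw [key]
  exact hat _ (mem_image_of_mem g hf)

end JSet

/-- If `A` is a J-set, `F` a finite nonempty set of sequences and `⟨x_n⟩` a sequence in
`ℕ`, then there is a sub-IP-set `FS(⟨y_n⟩) ⊆ FS(⟨x_n⟩)` each of whose elements
`∑_{t ∈ G} x_t` (with `G = {t₁ < … < t_m}`) admits `a ∈ S^{m+1}` with
`a₁·f(x_{t₁})·a₂·f(x_{t₂})⋯a_m·f(x_{t_m})·a_{m+1} ∈ A` for every `f ∈ F`. -/
theorem jsetNC_sub_ipset {S : Type*} [Semigroup S] {A : Set S} (hA : IsJSetNC A)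
    (F : Finset (ℕ → S)) (hF : F.Nonempty) (x : ℕ → ℕ) :
    ∃ y : ℕ → ℕ, FS y ⊆ FS x ∧
      ∀ s ∈ FS y, ∃ G : Finset ℕ, G.Nonempty ∧ s = ∑ t ∈ G, x t ∧
        ∃ a : Fin (G.card + 1) → S,
          ∀ f ∈ F, interProd G.card a (fun j => x ((G.orderIsoOfFin rfl j : ℕ))) f ∈ A := by
  obtain ⟨B, hB, hgood | hbad⟩ := exists_blockLT_forall_biUnion (InterProdAdmissible A F x)
  · have hadm : ∀ s ∈ FS fun n => ∑ i ∈ B n, x i, ∃ G : Finset ℕ, G.Nonempty ∧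
        s = ∑ t ∈ G, x t ∧ InterProdAdmissible A F x G := by
      rintro s ⟨T, hT, rfl⟩
      exact ⟨T.biUnion B, (hgood T hT).1, (sum_biUnion_of_blockLT hB T x).symm, (hgood T hT).2⟩
    refine ⟨_, fun s hs => ?_, hadm⟩
    obtain ⟨G, hG, hsG, -⟩ := hadm s hs
    exact ⟨G, hG, hsG⟩
  · have hne (k : ℕ) : (B k).Nonempty := by simpa using (hbad {k} (singleton_nonempty k)).1
    obtain ⟨T, hT, hTadm⟩ := exists_interProdAdmissible_biUnion hA hF x hne hB
    exact absurd hTadm (hbad T hT).2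
end
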